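/- arXiv:2310.01822 — 3 statements merged into one kernel-verified Lean document; each statement's English description precedes it below -/
import Mathlib

section
/- There is n0 ∈ ℕ such that the following holds for every n ≥ n0. Let H be a B-free simplicial complex on n vertices in which every edge has size at most 3 and every vertex u satisfies d(u) > (9/8)(n−1) + 5/16. Then for every vertex v of H there are no three distinct vertices w, x, y such that {w,x}, {x,y} and {w,y} are all 2-edges of the link L_v (i.e., the 2-edges of no link contain a triangle; consequently every link consists only of isolated vertices, isolated 2-edges, and isolated induced 2-uniform stars with at least two edges). -/
open Finset

/-- `E` is the edge set of a simplicial complex: it is closed under taking subsets. -/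
def IsComplex {α : Type*} [DecidableEq α] (E : Finset (Finset α)) : Prop :=
  ∀ e ∈ E, ∀ f ⊆ e, f ∈ E

/-- `H` contains a copy of `F`: an injection of the vertices mapping edges to edges. -/
def HasCopy {α β : Type*} [DecidableEq β]
    (F : Finset (Finset α)) (H : Finset (Finset β)) : Prop :=
  ∃ f : α → β, Function.Injective f ∧ ∀ e ∈ F, e.image f ∈ H

/-- downward closure of a family of sets -/
def dClosure {α : Type*} [DecidableEq α] (S : Finset (Finset α)) : Finset (Finset α) :=
  S.biUnion Finset.powerset

/-- `ex(n,F)`: the extremal number for simplicial complexes -/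
noncomputable def exSC {α : Type*} (n : ℕ) (F : Finset (Finset α)) : ℕ :=
  sSup {m | ∃ E : Finset (Finset (Fin n)), IsComplex E ∧ ¬ HasCopy F E ∧ E.card = m}

/-- `ex^(k)(n,F)`: the extremal number for `k`-uniform hypergraphs -/
noncomputable def exUnif {α : Type*} (k n : ℕ) (F : Finset (Finset α)) : ℕ :=
  sSup {m | ∃ E : Finset (Finset (Fin n)),
    (∀ e ∈ E, e.card = k) ∧ ¬ HasCopy F E ∧ E.card = m}

/-- the complex `B`: downward closure of `{{v3,v4},{v1,v2,v3},{v1,v4,v5}}`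
(vertices `v1,…,v5` are `0,…,4`) -/
def B : Finset (Finset (Fin 5)) :=
  dClosure {{2, 3}, {0, 1, 2}, {0, 3, 4}}

/-- edge set of the link `L_v` -/
def linkEdges {V : Type*} [DecidableEq V] (E : Finset (Finset V)) (v : V) :
    Finset (Finset V) :=
  (E.filter (fun e => v ∈ e)).image (fun e => e.erase v)

/-- `d^(i)(u)`: number of `i`-edges containing `u` -/
def degI {V : Type*} [DecidableEq V] (E : Finset (Finset V)) (i : ℕ) (u : V) : ℕ :=
  (E.filter (fun e => u ∈ e ∧ e.card = i)).card

/-- `d(u)`: number of edges of size at least 2 containing `u` -/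
def dDeg {V : Type*} [DecidableEq V] (E : Finset (Finset V)) (u : V) : ℕ :=
  (E.filter (fun e => u ∈ e ∧ 2 ≤ e.card)).card


/-!
Suppose the link of `v` contains a triangle `wxy` and put `Q = {v, w, x, y}`; every triple of `Q`
through `v` is an edge. Forbidding `B` then forces, for each `u ∈ Q`:
* no 3-edge meets `Q` in exactly two vertices;
* if `{u, z, z'}` is an edge with `z, z' ∉ Q`, then `z` is a private neighbour of `u`
  (joined to `u` and to no other vertex of `Q`);
* the graph of such pairs `zz'` has no path with three edges, so one endpoint of each of its edges
  has degree at most two, and it has at most `2 |M_u|` edges, `M_u` being the private neighbours.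

The 2-neighbours of `u` avoid `u` and the private neighbours of the other vertices of `Q`, hence
`d(u) ≤ (n - 1 - ∑_{q ≠ u} |M_q|) + 4 + 2 |M_u|`. Summing over `Q` gives `∑_{u ∈ Q} d(u) ≤ 4n + 12`,
which contradicts `d(u) > 9/8 (n - 1)` once `n ≥ 31`.
-/

variable {V : Type*} [DecidableEq V]

lemma hasCopy_B {E : Finset (Finset V)} (hE : IsComplex E) {a b c d e : V}
    (hnd : [a, b, c, d, e].Nodup) (habc : {a, b, c} ∈ E) (hade : {a, d, e} ∈ E)
    (hcd : {c, d} ∈ E) : HasCopy B E := by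
  refine ⟨![a, b, c, d, e], List.nodup_ofFn.mp (by simpa using hnd), fun s hs => ?_⟩
  simp only [B, dClosure, mem_biUnion, mem_insert, mem_singleton, mem_powerset] at hs
  obtain ⟨g, rfl | rfl | rfl, hsg⟩ := hs <;>
    have hsub := image_subset_image (f := ![a, b, c, d, e]) hsg <;>
    simp only [image_insert, image_singleton] at hsub
  · exact hE _ hcd _ (by simpa using hsub)
  · exact hE _ habc _ (by simpa using hsub)
  · exact hE _ hade _ (by simpa using hsub)

lemma exists_eq_pair_of_mem {f : Finset V} {a : V} (hf : #f = 2) (ha : a ∈ f) :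
    ∃ t, t ≠ a ∧ f = {a, t} := by
  obtain ⟨t, ht⟩ := card_eq_one.mp (by rw [card_erase_of_mem ha, hf] : #(f.erase a) = 1)
  refine ⟨t, ne_of_mem_erase (ht ▸ mem_singleton_self t), ?_⟩
  rw [← ht, insert_erase ha]

section Complex

variable {E : Finset (Finset V)} {v : V}

lemma dDeg_le_degI_two_add_degI_three (h3 : ∀ e ∈ E, #e ≤ 3) (u : V) :
    dDeg E u ≤ degI E 2 u + degI E 3 u := by
  refine (card_le_card fun e he => ?_).trans (card_union_le _ _)
  obtain ⟨heE, hue, he2⟩ := mem_filter.mp he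
  have := h3 e heE
  rcases (by omega : #e = 2 ∨ #e = 3) with h | h
  · exact mem_union_left _ (mem_filter.mpr ⟨heE, hue, h⟩)
  · exact mem_union_right _ (mem_filter.mpr ⟨heE, hue, h⟩)

lemma insert_mem_of_mem_linkEdges {f : Finset V} (hf : f ∈ linkEdges E v) :
    insert v f ∈ E ∧ v ∉ f := by
  obtain ⟨e, he, rfl⟩ := mem_image.mp hf
  obtain ⟨heE, hve⟩ := mem_filter.mp he
  exact ⟨by rwa [insert_erase hve], notMem_erase v e⟩

lemma erase_mem_of_link_triangle (hE : IsComplex E) {w x y : V} (hvwx : {v, w, x} ∈ E)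
    (hvxy : {v, x, y} ∈ E) (hvwy : {v, w, y} ∈ E) :
    ∀ p ∈ ({v, w, x, y} : Finset V), p ≠ v → ({v, w, x, y} : Finset V).erase p ∈ E := by
  intro p hp hpv
  simp only [mem_insert, mem_singleton] at hp
  rcases hp with rfl | rfl | rfl | rfl
  · exact absurd rfl hpv
  · exact hE _ hvxy _ fun t => by simp; tauto
  · exact hE _ hvwy _ fun t => by simp; tauto
  · exact hE _ hvwx _ fun t => by simp; tauto

end Complex

section PathFree

variable {G : Finset (Finset V)} {M : Finset V}

lemma exists_mem_degree_le_two (hG : G ⊆ M.powersetCard 2)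
    (hP : ∀ a b c d : V, [a, b, c, d].Nodup → {a, b} ∈ G → {b, c} ∈ G → {c, d} ∈ G → False)
    {f : Finset V} (hf : f ∈ G) : ∃ z ∈ f, #{g ∈ G | z ∈ g} ≤ 2 := by
  have hcard : ∀ g ∈ G, #g = 2 := fun g hg => (mem_powersetCard.mp (hG hg)).2
  obtain ⟨a, b, hab, rfl⟩ := card_eq_two.mp (hcard _ hf)
  by_contra! hdeg
  obtain ⟨g, hg, hgf⟩ := exists_mem_notMem_of_card_lt_card (s := {{a, b}})
    (t := {g ∈ G | a ∈ g}) ((card_singleton _).trans_lt (by have := hdeg a (by simp); omega))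
  obtain ⟨hgG, hag⟩ := mem_filter.mp hg
  obtain ⟨t₁, ht₁a, rfl⟩ := exists_eq_pair_of_mem (hcard g hgG) hag
  obtain ⟨h, hh, hhf⟩ := exists_mem_notMem_of_card_lt_card (s := {{a, b}, {b, t₁}})
    (t := {g ∈ G | b ∈ g}) (card_le_two.trans_lt (hdeg b (by simp)))
  obtain ⟨hhG, hbh⟩ := mem_filter.mp hh
  obtain ⟨t₂, ht₂b, rfl⟩ := exists_eq_pair_of_mem (hcard h hhG) hbh
  have ht₁b : t₁ ≠ b := by rintro rfl; simp at hgf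
  have ht₂a : t₂ ≠ a := by rintro rfl; simp [pair_comm] at hhf
  have ht₂t₁ : t₂ ≠ t₁ := by rintro rfl; simp at hhf
  exact hP t₁ a b t₂ (by simp; grind) (pair_comm a t₁ ▸ hgG) hf hhG

lemma card_le_two_mul_card_of_pathFree (hG : G ⊆ M.powersetCard 2)
    (hP : ∀ a b c d : V, [a, b, c, d].Nodup → {a, b} ∈ G → {b, c} ∈ G → {c, d} ∈ G → False) :
    #G ≤ 2 * #M := by
  set L := {z ∈ M | #{g ∈ G | z ∈ g} ≤ 2}
  have hcover : G ⊆ L.biUnion fun z => {g ∈ G | z ∈ g} := by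
    intro f hf
    obtain ⟨z, hzf, hz⟩ := exists_mem_degree_le_two hG hP hf
    exact mem_biUnion.mpr ⟨z, mem_filter.mpr ⟨(mem_powersetCard.mp (hG hf)).1 hzf, hz⟩,
      mem_filter.mpr ⟨hf, hzf⟩⟩
  calc #G ≤ ∑ z ∈ L, #{g ∈ G | z ∈ g} := (card_le_card hcover).trans card_biUnion_le
    _ ≤ #L * 2 := sum_le_card_nsmul _ _ _ fun z hz => (mem_filter.mp hz).2
    _ ≤ 2 * #M := by rw [mul_comm]; exact Nat.mul_le_mul_left 2 (card_filter_le _ _)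

end PathFree

/- The hypothesis `hQ` abstracts `Q = {v, w, x, y}` with `wxy` a triangle in the link of `v`:
every triple of `Q` through `v` is an edge. -/
section FourSet

variable {E : Finset (Finset V)} {Q : Finset V} {v : V}

lemma exists_mem_ne_of_three_lt_card (hQ3 : 3 < #Q) (a b c : V) :
    ∃ d ∈ Q, d ≠ a ∧ d ≠ b ∧ d ≠ c := by
  obtain ⟨d, hdQ, hd⟩ := exists_mem_notMem_of_card_lt_card (s := {a, b, c}) (t := Q)
    (card_le_three.trans_lt hQ3)
  exact ⟨d, hdQ, by simpa [not_or] using hd⟩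

lemma exists_triple_mem (hE : IsComplex E) (hQ3 : 3 < #Q)
    (hQ : ∀ p ∈ Q, p ≠ v → Q.erase p ∈ E) {a b : V} (ha : a ∈ Q) (hb : b ∈ Q) :
    ∃ c ∈ Q, c ≠ a ∧ c ≠ b ∧ {a, b, c} ∈ E := by
  obtain ⟨s, hsQ, hsa, hsb, hsv⟩ := exists_mem_ne_of_three_lt_card hQ3 a b v
  obtain ⟨c, hcQ, hca, hcb, hcs⟩ := exists_mem_ne_of_three_lt_card hQ3 a b s
  refine ⟨c, hcQ, hca, hcb, hE _ (hQ s hsQ hsv) _ fun t ht => ?_⟩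
  simp only [mem_insert, mem_singleton] at ht
  rcases ht with rfl | rfl | rfl <;> simp [*, Ne.symm hsa, Ne.symm hsb]

lemma pair_mem (hE : IsComplex E) (hQ3 : 3 < #Q)
    (hQ : ∀ p ∈ Q, p ≠ v → Q.erase p ∈ E) {a b : V} (ha : a ∈ Q) (hb : b ∈ Q) :
    {a, b} ∈ E := by
  obtain ⟨c, -, -, -, habc⟩ := exists_triple_mem hE hQ3 hQ ha hb
  exact hE _ habc _ (by simp [insert_subset_iff])

lemma triple_notMem_of_notMem (hE : IsComplex E) (hB : ¬ HasCopy B E) (hQ3 : 3 < #Q)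
    (hQ : ∀ p ∈ Q, p ≠ v → Q.erase p ∈ E) {p q z : V} (hp : p ∈ Q) (hq : q ∈ Q)
    (hpq : p ≠ q) (hz : z ∉ Q) : {p, q, z} ∉ E := by
  wlog hqv : q ≠ v generalizing p q
  · rw [insert_comm]
    exact this hq hp hpq.symm (not_not.mp hqv ▸ hpq)
  obtain ⟨r, hrQ, hrp, hrq, -⟩ := exists_mem_ne_of_three_lt_card hQ3 p q q
  obtain ⟨s, hsQ, hsp, hsq, hsr⟩ := exists_mem_ne_of_three_lt_card hQ3 p q r
  intro hpqz
  refine hB (hasCopy_B hE (a := p) (b := r) (c := s) (d := q) (e := z) ?_ ?_ hpqz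
    (pair_mem hE hQ3 hQ hsQ hq))
  · have := ne_of_mem_of_not_mem hp hz
    simp; grind
  · exact hE _ (hQ q hq hqv) _ (by simp [insert_subset_iff, *])

end FourSet

section PrivateNbrs

variable [Fintype V] {E : Finset (Finset V)} {Q : Finset V} {v u : V}

def privateNbrs (E : Finset (Finset V)) (Q : Finset V) (q : V) : Finset V :=
  {z | z ∉ Q ∧ {q, z} ∈ E ∧ ∀ p ∈ Q, p ≠ q → {p, z} ∉ E}

lemma privateNbrs_disjoint {q q' : V} (hq : q ∈ Q) (hqq' : q ≠ q') :
    Disjoint (privateNbrs E Q q) (privateNbrs E Q q') := by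
  simp only [privateNbrs, disjoint_left, mem_filter, mem_univ, true_and]
  exact fun z hz hz' => hz'.2.2 q hq hqq' hz.2.1

lemma mem_privateNbrs_of_triple_mem (hE : IsComplex E) (hB : ¬ HasCopy B E) (hQ3 : 3 < #Q)
    (hQ : ∀ p ∈ Q, p ≠ v → Q.erase p ∈ E) {z z' : V} (hu : u ∈ Q) (hz : z ∉ Q) (hz' : z' ∉ Q)
    (hzz' : z ≠ z') (he : {u, z, z'} ∈ E) :
    z ∈ privateNbrs E Q u := by
  simp only [privateNbrs, mem_filter, mem_univ, true_and]
  refine ⟨hz, hE _ he _ (by simp [insert_subset_iff]), fun p hp hpu hpz => ?_⟩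
  obtain ⟨r, hrQ, hru, hrp, hupr⟩ := exists_triple_mem hE hQ3 hQ hu hp
  refine hB (hasCopy_B hE (a := u) (b := z') (c := z) (d := p) (e := r) ?_
    (by rwa [pair_comm]) hupr (by rwa [pair_comm]))
  have := ne_of_mem_of_not_mem hu hz
  have := ne_of_mem_of_not_mem hu hz'
  have := ne_of_mem_of_not_mem hp hz
  have := ne_of_mem_of_not_mem hp hz'
  have := ne_of_mem_of_not_mem hrQ hz
  have := ne_of_mem_of_not_mem hrQ hz'
  simp; grind

lemma erase_subset_privateNbrs (hE : IsComplex E) (hB : ¬ HasCopy B E) (hQ3 : 3 < #Q)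
    (hQ : ∀ p ∈ Q, p ≠ v → Q.erase p ∈ E) (hu : u ∈ Q) {e : Finset V}
    (he : e ∈ E) (hue : u ∈ e) (he3 : #e = 3) (heQ : ¬ e ⊆ Q) :
    e.erase u ⊆ privateNbrs E Q u := by
  obtain ⟨z, z', hzz', hpair⟩ :=
    card_eq_two.mp (by rw [card_erase_of_mem hue, he3] : #(e.erase u) = 2)
  have hzu : z ≠ u := ne_of_mem_erase (hpair ▸ mem_insert_self z {z'} : z ∈ e.erase u)
  have hz'u : z' ≠ u := ne_of_mem_erase (hpair ▸ by simp : z' ∈ e.erase u)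
  rw [← insert_erase hue, hpair] at he heQ
  have hout : ∀ a b, {u, a, b} ∈ E → a ≠ u → ¬ {u, a, b} ⊆ Q → a ∉ Q := by
    intro a b hab hau habQ haQ
    have hbQ : b ∉ Q := fun hbQ =>
      habQ (insert_subset hu (insert_subset haQ (singleton_subset_iff.mpr hbQ)))
    exact triple_notMem_of_notMem hE hB hQ3 hQ hu haQ hau.symm hbQ hab
  have hzQ : z ∉ Q := hout z z' he hzu heQ
  rw [pair_comm] at he heQ
  have hz'Q : z' ∉ Q := hout z' z he hz'u heQ
  rw [hpair]
  intro t ht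
  rcases mem_insert.mp ht with rfl | ht
  · rw [pair_comm] at he
    exact mem_privateNbrs_of_triple_mem hE hB hQ3 hQ hu hzQ hz'Q hzz' he
  · rw [mem_singleton.mp ht]
    exact mem_privateNbrs_of_triple_mem hE hB hQ3 hQ hu hz'Q hzQ hzz'.symm he

lemma degI_two_add_sum_card_privateNbrs_le (hu : u ∈ Q) :
    degI E 2 u + 1 + ∑ q ∈ Q.erase u, #(privateNbrs E Q q) ≤ Fintype.card V := by
  set nbrs : Finset V := {z | z ≠ u ∧ {u, z} ∈ E}
  have hdeg : degI E 2 u ≤ #nbrs := by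
    refine (card_le_card fun e he => ?_).trans (card_image_le (f := fun z => ({u, z} : Finset V)))
    obtain ⟨heE, hue, he2⟩ := mem_filter.mp he
    obtain ⟨t, htu, rfl⟩ := exists_eq_pair_of_mem he2 hue
    exact mem_image.mpr ⟨t, by simp [nbrs, htu, heE], rfl⟩
  have hdisj : Disjoint (insert u nbrs) ((Q.erase u).biUnion (privateNbrs E Q)) := by
    simp only [disjoint_left, mem_insert, mem_biUnion, mem_erase, privateNbrs, mem_filter,
      mem_univ, true_and, nbrs, not_exists, not_and]
    rintro z (rfl | ⟨-, hz⟩) q ⟨hqu, -⟩ hzQ - hzq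
    · exact hzQ hu
    · exact hzq u hu (Ne.symm hqu) hz
  have hcard := card_le_univ (insert u nbrs ∪ (Q.erase u).biUnion (privateNbrs E Q))
  rw [card_union_of_disjoint hdisj, card_insert_of_notMem (by simp [nbrs]),
    card_biUnion fun q hq q' _ hqq' => privateNbrs_disjoint (mem_of_mem_erase hq) hqq'] at hcard
  omega

lemma degI_three_le (hE : IsComplex E) (hB : ¬ HasCopy B E) (hQ4 : #Q = 4)
    (hQ : ∀ p ∈ Q, p ≠ v → Q.erase p ∈ E) (hu : u ∈ Q) :
    degI E 3 u ≤ 4 + 2 * #(privateNbrs E Q u) := by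
  set M := privateNbrs E Q u
  set T : Finset (Finset V) := {e ∈ E | u ∈ e ∧ #e = 3}
  have hinside : #(T.filter (· ⊆ Q)) ≤ 4 := by
    refine (card_le_card fun e he => ?_).trans ((card_powersetCard 3 Q).trans (by rw [hQ4]; rfl)).le
    obtain ⟨heT, heQ⟩ := mem_filter.mp he
    obtain ⟨-, -, he3⟩ := mem_filter.mp heT
    exact mem_powersetCard.mpr ⟨heQ, he3⟩
  have houtside : #(T.filter (¬ · ⊆ Q)) ≤ 2 * #M := by
    set G : Finset (Finset V) := {f ∈ M.powersetCard 2 | insert u f ∈ E}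
    have huM : u ∉ M := fun h => (mem_filter.mp h).2.1 hu
    refine (card_le_card_of_injOn (·.erase u) (fun e he => ?_) ?_).trans
      (card_le_two_mul_card_of_pathFree (G := G) (filter_subset _ _) ?_)
    · obtain ⟨heT, heQ⟩ := mem_filter.mp he
      obtain ⟨heE, hue, he3⟩ := mem_filter.mp heT
      refine mem_filter.mpr ⟨mem_powersetCard.mpr ⟨?_, ?_⟩, by rwa [insert_erase hue]⟩
      · exact erase_subset_privateNbrs hE hB (by omega) hQ hu heE hue he3 heQ
      · rw [card_erase_of_mem hue, he3]
    · exact (erase_injOn' u).mono fun e he => (mem_filter.mp (mem_filter.mp he).1).2.1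
    · intro a b c d hnd hab hbc hcd
      have hins : ∀ {f}, f ∈ G → insert u f ∈ E := fun hf => (mem_filter.mp hf).2
      have hne : ∀ {f z}, f ∈ G → z ∈ f → z ≠ u := fun hf hz h =>
        huM (h ▸ (mem_powersetCard.mp (mem_filter.mp hf).1).1 hz)
      have := hne hab (mem_insert_self a _)
      have := hne hbc (mem_insert_self b _)
      have := hne hcd (mem_insert_self c _)
      have := hne hcd (by simp : d ∈ {c, d})
      exact hB (hasCopy_B hE (a := u) (b := a) (c := b) (d := c) (e := d) (by simp; grind)
        (hins hab) (hins hcd) (hE _ (hins hbc) _ (subset_insert _ _)))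
  rw [show degI E 3 u = #T from rfl, ← card_filter_add_card_filter_not (· ⊆ Q)]
  omega

lemma dDeg_add_sum_card_privateNbrs_le (hE : IsComplex E) (hB : ¬ HasCopy B E)
    (h3 : ∀ e ∈ E, #e ≤ 3) (hQ4 : #Q = 4) (hQ : ∀ p ∈ Q, p ≠ v → Q.erase p ∈ E) (hu : u ∈ Q) :
    dDeg E u + 1 + ∑ q ∈ Q, #(privateNbrs E Q q) ≤
      Fintype.card V + 4 + 3 * #(privateNbrs E Q u) := by
  have h23 := dDeg_le_degI_two_add_degI_three h3 u
  have h2 := degI_two_add_sum_card_privateNbrs_le (E := E) hu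
  have h3 := degI_three_le hE hB hQ4 hQ hu
  have hsum := sum_erase_add Q (fun q => #(privateNbrs E Q q)) hu
  omega

lemma sum_dDeg_le (hE : IsComplex E) (hB : ¬ HasCopy B E) (h3 : ∀ e ∈ E, #e ≤ 3)
    (hQ4 : #Q = 4) (hQ : ∀ p ∈ Q, p ≠ v → Q.erase p ∈ E) :
    ∑ u ∈ Q, dDeg E u ≤ 4 * Fintype.card V + 12 := by
  have h := sum_le_sum fun u hu => dDeg_add_sum_card_privateNbrs_le hE hB h3 hQ4 hQ hu
  simp only [sum_add_distrib, sum_const, hQ4, ← mul_sum, smul_eq_mul] at h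
  omega

end PrivateNbrs

theorem statement17 : ∃ n0 : ℕ, ∀ n : ℕ, n0 ≤ n → ∀ E : Finset (Finset (Fin n)),
    IsComplex E → ¬ HasCopy B E →
    (∀ e ∈ E, e.card ≤ 3) →
    (∀ u : Fin n, (dDeg E u : ℝ) > 9 / 8 * ((n : ℝ) - 1) + 5 / 16) →
    ∀ v : Fin n, ¬ ∃ w x y : Fin n, w ≠ x ∧ x ≠ y ∧ w ≠ y ∧
      ({w, x} : Finset (Fin n)) ∈ linkEdges E v ∧
      ({x, y} : Finset (Fin n)) ∈ linkEdges E v ∧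
      ({w, y} : Finset (Fin n)) ∈ linkEdges E v := by
  refine ⟨31, fun n hn E hE hB h3 hdeg v ⟨w, x, y, hwx, hxy, hwy, hlwx, hlxy, hlwy⟩ => ?_⟩
  obtain ⟨hvwx, hvwx'⟩ := insert_mem_of_mem_linkEdges hlwx
  obtain ⟨hvxy, hvxy'⟩ := insert_mem_of_mem_linkEdges hlxy
  obtain ⟨hvwy, -⟩ := insert_mem_of_mem_linkEdges hlwy
  have hQ4 : #({v, w, x, y} : Finset (Fin n)) = 4 := by
    rw [card_insert_of_notMem (by simp at hvwx' hvxy' ⊢; tauto),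
      card_eq_three.mpr ⟨w, x, y, hwx, hwy, hxy, rfl⟩]
  have hupper : ∑ u ∈ {v, w, x, y}, (dDeg E u : ℝ) ≤ 4 * n + 12 := by
    exact_mod_cast Fintype.card_fin n ▸
      sum_dDeg_le hE hB h3 hQ4 (erase_mem_of_link_triangle hE hvwx hvxy hvwy)
  have hlower := sum_lt_sum_of_nonempty (s := {v, w, x, y}) ⟨v, mem_insert_self v _⟩
    fun u _ => hdeg u
  rw [sum_const, hQ4] at hlower
  have hn' : (31 : ℝ) ≤ n := by exact_mod_cast hn
  norm_num at hlower
  linarith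
end

section
/- There is n0 ∈ ℕ such that the following holds for every n ≥ n0. Let H be a B-free simplicial complex on n vertices in which every edge has size at most 3 and every vertex u satisfies d(u) > (9/8)(n−1) + 5/16. If v and w are distinct vertices such that the 2-edges of the link L_v are pairwise disjoint and the 2-edges of the link L_w are pairwise disjoint, then no 3-edge of H contains both v and w. -/
open Finset

lemma card2_repr {α : Type*} [DecidableEq α] {e : Finset α} {x : α}
    (hx : x ∈ e) (h : e.card = 2) : ∃ y, y ≠ x ∧ e = {x, y} := by
  have h1 : (e.erase x).card = 1 := by rw [Finset.card_erase_of_mem hx, h]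
  obtain ⟨y, hy⟩ := Finset.card_eq_one.mp h1
  have hyx : y ≠ x := by
    have : y ∈ e.erase x := by rw [hy]; exact Finset.mem_singleton_self y
    exact Finset.ne_of_mem_erase this
  exact ⟨y, hyx, by rw [← Finset.insert_erase hx, hy]⟩

lemma noB {n : ℕ} {E : Finset (Finset (Fin n))} (hC : IsComplex E) (hB : ¬ HasCopy B E)
    {p a b c d : Fin n}
    (hpa : p ≠ a) (hpb : p ≠ b) (hpc : p ≠ c) (hpd : p ≠ d)
    (hab : a ≠ b) (hac : a ≠ c) (had : a ≠ d)
    (hbc : b ≠ c) (hbd : b ≠ d) (hcd : c ≠ d)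
    (h1 : ({p, a, b} : Finset (Fin n)) ∈ E)
    (h2 : ({p, c, d} : Finset (Fin n)) ∈ E) :
    ({a, c} : Finset (Fin n)) ∉ E := by
  intro hedge
  apply hB
  classical
  refine ⟨![p, b, a, c, d], ?_, ?_⟩
  · intro i j hij
    fin_cases i <;> fin_cases j <;> simp_all
  · have hBeq : B = ({∅, {2}, {3}, {2,3}, {0}, {1}, {0,1}, {0,2}, {1,2}, {0,1,2},
        {4}, {0,3}, {0,4}, {3,4}, {0,3,4}} : Finset (Finset (Fin 5))) := by decide
    have e0 : (![p, b, a, c, d]) 0 = p := rfl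
    have e1 : (![p, b, a, c, d]) 1 = b := rfl
    have e2 : (![p, b, a, c, d]) 2 = a := rfl
    have e3 : (![p, b, a, c, d]) 3 = c := rfl
    have e4 : (![p, b, a, c, d]) 4 = d := rfl
    have himg1 : Finset.image ![p, b, a, c, d] ({0,1,2} : Finset (Fin 5)) ∈ E := by
      have h : Finset.image ![p, b, a, c, d] ({0,1,2} : Finset (Fin 5)) = {p, b, a} := by
        simp [Finset.image_insert, e0, e1, e2]
      rw [h, Finset.pair_comm b a]
      exact h1
    have himg2 : Finset.image ![p, b, a, c, d] ({0,3,4} : Finset (Fin 5)) ∈ E := by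
      have h : Finset.image ![p, b, a, c, d] ({0,3,4} : Finset (Fin 5)) = {p, c, d} := by
        simp [Finset.image_insert, e0, e3, e4]
      rw [h]; exact h2
    have himg3 : Finset.image ![p, b, a, c, d] ({2,3} : Finset (Fin 5)) ∈ E := by
      have h : Finset.image ![p, b, a, c, d] ({2,3} : Finset (Fin 5)) = {a, c} := by
        simp [Finset.image_insert, e2, e3]
      rw [h]; exact hedge
    intro e he
    rw [hBeq] at he
    fin_cases he <;>
      first
      | exact hC _ himg1 _ (Finset.image_subset_image (by decide))
      | exact hC _ himg2 _ (Finset.image_subset_image (by decide))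
      | exact hC _ himg3 _ (Finset.image_subset_image (by decide))

lemma deg2_bound {n : ℕ} {E : Finset (Finset (Fin n))} {x : Fin n} {F : Finset (Fin n)}
    (hxF : x ∉ F) (hF : ∀ y ∈ F, ({x, y} : Finset (Fin n)) ∉ E) :
    degI E 2 x + F.card ≤ n - 1 := by
  classical
  set T := E.filter (fun e => x ∈ e ∧ e.card = 2) with hT
  set oth : Finset (Fin n) → Fin n := fun e => ((e.erase x).min).untopD x with hothdef
  have hoth : ∀ e ∈ T, oth e ≠ x ∧ e = {x, oth e} ∧ e ∈ E := by
    intro e heT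
    rw [hT, Finset.mem_filter] at heT
    obtain ⟨heE, hxe, hc⟩ := heT
    obtain ⟨y, hyx, hey⟩ := card2_repr hxe hc
    have h1 : e.erase x = {y} := by
      rw [hey, Finset.erase_insert (by simp [Ne.symm hyx])]
    have h2 : oth e = y := by
      rw [hothdef]; simp only
      rw [h1, Finset.min_singleton, WithTop.untopD_coe]
    exact ⟨by rw [h2]; exact hyx, by rw [h2]; exact hey, heE⟩
  have hinj : Set.InjOn oth T := by
    intro e he e' he' hee
    rw [(hoth e he).2.1, (hoth e' he').2.1, hee]
  have hmaps : ∀ e ∈ T, oth e ∈ (univ.erase x) \ F := by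
    intro e he
    obtain ⟨hne, heq, heE⟩ := hoth e he
    rw [Finset.mem_sdiff, Finset.mem_erase]
    exact ⟨⟨hne, mem_univ _⟩, fun hmem => hF _ hmem (heq ▸ heE)⟩
  have himage : T.image oth ⊆ (univ.erase x) \ F := by
    intro y hy
    obtain ⟨e, he, rfl⟩ := Finset.mem_image.mp hy
    exact hmaps e he
  have h1 : T.card = (T.image oth).card := (Finset.card_image_of_injOn hinj).symm
  have hdisj : Disjoint (T.image oth) F := by
    rw [Finset.disjoint_left]
    intro y hy hyF
    exact (Finset.mem_sdiff.mp (himage hy)).2 hyF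
  have h2 : (T.image oth).card + F.card ≤ (univ.erase x).card := by
    rw [← Finset.card_union_of_disjoint hdisj]
    apply Finset.card_le_card
    intro y hy
    rcases Finset.mem_union.mp hy with h | h
    · exact (Finset.mem_sdiff.mp (himage h)).1
    · exact Finset.mem_erase.mpr ⟨fun h' => hxF (h' ▸ h), mem_univ _⟩
  have h3 : (univ.erase x : Finset (Fin n)).card = n - 1 := by
    rw [Finset.card_erase_of_mem (mem_univ x), Finset.card_univ, Fintype.card_fin]
  have h4 : degI E 2 x = T.card := by rw [hT]; rfl
  omega

theorem statement18 : ∃ n0 : ℕ, ∀ n : ℕ, n0 ≤ n → ∀ E : Finset (Finset (Fin n)),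
    IsComplex E → ¬ HasCopy B E →
    (∀ e ∈ E, e.card ≤ 3) →
    (∀ u : Fin n, (dDeg E u : ℝ) > 9 / 8 * ((n : ℝ) - 1) + 5 / 16) →
    ∀ v w : Fin n, v ≠ w →
      (∀ e ∈ linkEdges E v, ∀ e' ∈ linkEdges E v,
        e.card = 2 → e'.card = 2 → e ≠ e' → Disjoint e e') →
      (∀ e ∈ linkEdges E w, ∀ e' ∈ linkEdges E w,
        e.card = 2 → e'.card = 2 → e ≠ e' → Disjoint e e') →
      ¬ ∃ e ∈ E, e.card = 3 ∧ v ∈ e ∧ w ∈ e := by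
  classical
  refine ⟨20, ?_⟩
  intro n hn E hC hB hsize hdeg v w hvw hMv hMw
  rintro ⟨e0, he0E, he0c, hve0, hwe0⟩
  -- the third vertex x
  have hwe0' : w ∈ e0.erase v := Finset.mem_erase.mpr ⟨Ne.symm hvw, hwe0⟩
  have hec2 : (e0.erase v).card = 2 := by rw [Finset.card_erase_of_mem hve0, he0c]
  obtain ⟨x, hxw, herepr⟩ := card2_repr hwe0' hec2
  have hxev : x ∈ e0.erase v := by rw [herepr]; simp
  have hxe0 : x ∈ e0 := Finset.mem_of_mem_erase hxev
  have hxv : x ≠ v := Finset.ne_of_mem_erase hxev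
  have he0repr : e0 = {v, w, x} := by rw [← Finset.insert_erase hve0, herepr]
  -- pairs inside edges are edges
  have hpair : ∀ (a b : Fin n) (t : Finset (Fin n)), t ∈ E → a ∈ t → b ∈ t →
      ({a, b} : Finset (Fin n)) ∈ E := by
    intro a b t ht ha hb
    refine hC t ht _ ?_
    intro s hs
    rcases Finset.mem_insert.mp hs with h | h
    · exact h ▸ ha
    · exact (Finset.mem_singleton.mp h) ▸ hb
  -- two triangles through u sharing another vertex coincide (matching link)
  have link_uniq : ∀ u : Fin n,
      (∀ e ∈ linkEdges E u, ∀ e' ∈ linkEdges E u,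
        e.card = 2 → e'.card = 2 → e ≠ e' → Disjoint e e') →
      ∀ t, t ∈ E → ∀ t', t' ∈ E → t.card = 3 → t'.card = 3 → u ∈ t → u ∈ t' →
      ∀ z, z ≠ u → z ∈ t → z ∈ t' → t = t' := by
    intro u hM t htE t' htE' hc hc' hut hut' z hzu hzt hzt'
    by_contra hne
    have hm1 : t.erase u ∈ linkEdges E u :=
      Finset.mem_image_of_mem _ (Finset.mem_filter.mpr ⟨htE, hut⟩)
    have hm2 : t'.erase u ∈ linkEdges E u :=
      Finset.mem_image_of_mem _ (Finset.mem_filter.mpr ⟨htE', hut'⟩)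
    have hc1 : (t.erase u).card = 2 := by rw [Finset.card_erase_of_mem hut, hc]
    have hc2' : (t'.erase u).card = 2 := by rw [Finset.card_erase_of_mem hut', hc']
    have hnee : t.erase u ≠ t'.erase u := by
      intro h
      exact hne (by rw [← Finset.insert_erase hut, h, Finset.insert_erase hut'])
    have hd := hM _ hm1 _ hm2 hc1 hc2' hnee
    exact Finset.disjoint_left.mp hd (Finset.mem_erase.mpr ⟨hzu, hzt⟩)
      (Finset.mem_erase.mpr ⟨hzu, hzt'⟩)
  -- triangle stars
  set Tv := E.filter (fun e => v ∈ e ∧ e.card = 3) with hTvdef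
  set Tw := E.filter (fun e => w ∈ e ∧ e.card = 3) with hTwdef
  set Tx := E.filter (fun e => x ∈ e ∧ e.card = 3) with hTxdef
  have he0Tv : e0 ∈ Tv := by rw [hTvdef]; exact Finset.mem_filter.mpr ⟨he0E, hve0, he0c⟩
  have he0Tw : e0 ∈ Tw := by rw [hTwdef]; exact Finset.mem_filter.mpr ⟨he0E, hwe0, he0c⟩
  have he0Tx : e0 ∈ Tx := by rw [hTxdef]; exact Finset.mem_filter.mpr ⟨he0E, hxe0, he0c⟩
  have hTvfacts : ∀ t ∈ Tv.erase e0, x ∉ t ∧ w ∉ t := by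
    intro t ht
    obtain ⟨htne, htTv⟩ := Finset.mem_erase.mp ht
    rw [hTvdef] at htTv
    obtain ⟨htE, hvt, htc⟩ := Finset.mem_filter.mp htTv
    constructor
    · intro hxt
      exact htne (link_uniq v hMv t htE e0 he0E htc he0c hvt hve0 x hxv hxt hxe0)
    · intro hwt
      exact htne (link_uniq v hMv t htE e0 he0E htc he0c hvt hve0 w (Ne.symm hvw) hwt hwe0)
  have hTwfacts : ∀ t ∈ Tw.erase e0, x ∉ t ∧ v ∉ t := by
    intro t ht
    obtain ⟨htne, htTw⟩ := Finset.mem_erase.mp ht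
    rw [hTwdef] at htTw
    obtain ⟨htE, hwt, htc⟩ := Finset.mem_filter.mp htTw
    constructor
    · intro hxt
      exact htne (link_uniq w hMw t htE e0 he0E htc he0c hwt hwe0 x hxw hxt hxe0)
    · intro hvt
      exact htne (link_uniq w hMw t htE e0 he0E htc he0c hwt hwe0 v hvw hvt hve0)
  have hTxfacts : ∀ t ∈ Tx.erase e0, v ∉ t ∧ w ∉ t := by
    intro t ht
    obtain ⟨htne, htTx⟩ := Finset.mem_erase.mp ht
    rw [hTxdef] at htTx
    obtain ⟨htE, hxt, htc⟩ := Finset.mem_filter.mp htTx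
    constructor
    · intro hvt
      exact htne (link_uniq v hMv t htE e0 he0E htc he0c hvt hve0 x hxv hxt hxe0)
    · intro hwt
      exact htne (link_uniq w hMw t htE e0 he0E htc he0c hwt hwe0 x hxw hxt hxe0)
  -- vertex sets A, Aw of the other triangles at v and w
  set A := (Tv.erase e0).biUnion (fun t => t.erase v) with hAdef
  set Aw := (Tw.erase e0).biUnion (fun t => t.erase w) with hAwdef
  have hAmem : ∀ y ∈ A, ({x, y} : Finset (Fin n)) ∉ E ∧ ({w, y} : Finset (Fin n)) ∉ E ∧
      y ≠ v ∧ y ≠ x ∧ y ≠ w := by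
    intro y hy
    rw [hAdef] at hy
    obtain ⟨t, ht, hyt⟩ := Finset.mem_biUnion.mp hy
    obtain ⟨hxnt, hwnt⟩ := hTvfacts t ht
    obtain ⟨htne, htTv⟩ := Finset.mem_erase.mp ht
    rw [hTvdef] at htTv
    obtain ⟨htE, hvt, htc⟩ := Finset.mem_filter.mp htTv
    have hyv : y ≠ v := Finset.ne_of_mem_erase hyt
    have hytt : y ∈ t := Finset.mem_of_mem_erase hyt
    have hcc : (t.erase v).card = 2 := by rw [Finset.card_erase_of_mem hvt, htc]
    obtain ⟨y', hy'y, hrepr⟩ := card2_repr hyt hcc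
    have hy'ev : y' ∈ t.erase v := by rw [hrepr]; simp
    have hy'v : y' ≠ v := Finset.ne_of_mem_erase hy'ev
    have hy't : y' ∈ t := Finset.mem_of_mem_erase hy'ev
    have htrepr : t = {v, y, y'} := by rw [← Finset.insert_erase hvt, hrepr]
    have hyx : y ≠ x := fun h => hxnt (h ▸ hytt)
    have hyw : y ≠ w := fun h => hwnt (h ▸ hytt)
    have hy'x : y' ≠ x := fun h => hxnt (h ▸ hy't)
    have hy'w : y' ≠ w := fun h => hwnt (h ▸ hy't)
    have htE' : ({v, y, y'} : Finset (Fin n)) ∈ E := htrepr ▸ htE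
    have he0E' : ({v, x, w} : Finset (Fin n)) ∈ E := by
      have h : ({v, x, w} : Finset (Fin n)) = {v, w, x} := by rw [Finset.pair_comm x w]
      rw [h, ← he0repr]; exact he0E
    have he0E'' : ({v, w, x} : Finset (Fin n)) ∈ E := he0repr ▸ he0E
    refine ⟨?_, ?_, hyv, hyx, hyw⟩
    · exact noB hC hB (Ne.symm hxv) hvw (Ne.symm hyv) (Ne.symm hy'v)
        hxw (Ne.symm hyx) (Ne.symm hy'x) (Ne.symm hyw) (Ne.symm hy'w) (Ne.symm hy'y)
        he0E' htE'
    · exact noB hC hB hvw (Ne.symm hxv) (Ne.symm hyv) (Ne.symm hy'v)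
        (Ne.symm hxw) (Ne.symm hyw) (Ne.symm hy'w) (Ne.symm hyx) (Ne.symm hy'x)
        (Ne.symm hy'y) he0E'' htE'
  have hAwmem : ∀ y ∈ Aw, ({x, y} : Finset (Fin n)) ∉ E ∧ ({w, y} : Finset (Fin n)) ∈ E ∧
      y ≠ w ∧ y ≠ x ∧ y ≠ v := by
    intro y hy
    rw [hAwdef] at hy
    obtain ⟨t, ht, hyt⟩ := Finset.mem_biUnion.mp hy
    obtain ⟨hxnt, hvnt⟩ := hTwfacts t ht
    obtain ⟨htne, htTw⟩ := Finset.mem_erase.mp ht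
    rw [hTwdef] at htTw
    obtain ⟨htE, hwt, htc⟩ := Finset.mem_filter.mp htTw
    have hyw : y ≠ w := Finset.ne_of_mem_erase hyt
    have hytt : y ∈ t := Finset.mem_of_mem_erase hyt
    have hcc : (t.erase w).card = 2 := by rw [Finset.card_erase_of_mem hwt, htc]
    obtain ⟨y', hy'y, hrepr⟩ := card2_repr hyt hcc
    have hy'ew : y' ∈ t.erase w := by rw [hrepr]; simp
    have hy'w : y' ≠ w := Finset.ne_of_mem_erase hy'ew
    have hy't : y' ∈ t := Finset.mem_of_mem_erase hy'ew
    have htrepr : t = {w, y, y'} := by rw [← Finset.insert_erase hwt, hrepr]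
    have hyx : y ≠ x := fun h => hxnt (h ▸ hytt)
    have hyv : y ≠ v := fun h => hvnt (h ▸ hytt)
    have hy'x : y' ≠ x := fun h => hxnt (h ▸ hy't)
    have hy'v : y' ≠ v := fun h => hvnt (h ▸ hy't)
    have htE' : ({w, y, y'} : Finset (Fin n)) ∈ E := htrepr ▸ htE
    have he0E' : ({w, x, v} : Finset (Fin n)) ∈ E := by
      have h : ({w, x, v} : Finset (Fin n)) = {v, w, x} := by
        ext s; simp only [Finset.mem_insert, Finset.mem_singleton]; tauto
      rw [h, ← he0repr]; exact he0E
    refine ⟨?_, hpair w y t htE hwt hytt, hyw, hyx, hyv⟩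
    · exact noB hC hB (Ne.symm hxw) (Ne.symm hvw) (Ne.symm hyw) (Ne.symm hy'w)
        hxv (Ne.symm hyx) (Ne.symm hy'x) (Ne.symm hyv) (Ne.symm hy'v) (Ne.symm hy'y)
        he0E' htE'
  have hdisjAAw : Disjoint A Aw := by
    rw [Finset.disjoint_left]
    intro y hyA hyAw
    exact (hAmem y hyA).2.1 (hAwmem y hyAw).2.1
  -- cardinality of A
  have hAcard : A.card + 2 = 2 * Tv.card := by
    have hdisj : ∀ t1 ∈ Tv.erase e0, ∀ t2 ∈ Tv.erase e0, t1 ≠ t2 →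
        Disjoint (t1.erase v) (t2.erase v) := by
      intro t1 h1 t2 h2 hne
      have h1' := Finset.mem_of_mem_erase h1
      have h2' := Finset.mem_of_mem_erase h2
      rw [hTvdef] at h1' h2'
      obtain ⟨h1E, h1v, h1c⟩ := Finset.mem_filter.mp h1'
      obtain ⟨h2E, h2v, h2c⟩ := Finset.mem_filter.mp h2'
      have m1 : t1.erase v ∈ linkEdges E v :=
        Finset.mem_image_of_mem _ (Finset.mem_filter.mpr ⟨h1E, h1v⟩)
      have m2 : t2.erase v ∈ linkEdges E v :=
        Finset.mem_image_of_mem _ (Finset.mem_filter.mpr ⟨h2E, h2v⟩)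
      have c1 : (t1.erase v).card = 2 := by rw [Finset.card_erase_of_mem h1v, h1c]
      have c2 : (t2.erase v).card = 2 := by rw [Finset.card_erase_of_mem h2v, h2c]
      refine hMv _ m1 _ m2 c1 c2 ?_
      intro h
      exact hne (by rw [← Finset.insert_erase h1v, h, Finset.insert_erase h2v])
    have h1 : A.card = ∑ t ∈ Tv.erase e0, (t.erase v).card := by
      rw [hAdef]; exact Finset.card_biUnion hdisj
    have h2 : ∀ t ∈ Tv.erase e0, (t.erase v).card = 2 := by
      intro t ht
      have ht' := Finset.mem_of_mem_erase ht
      rw [hTvdef] at ht'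
      obtain ⟨htE, hvt, htc⟩ := Finset.mem_filter.mp ht'
      rw [Finset.card_erase_of_mem hvt, htc]
    rw [Finset.sum_congr rfl h2, Finset.sum_const, smul_eq_mul] at h1
    have h3 : (Tv.erase e0).card = Tv.card - 1 := Finset.card_erase_of_mem he0Tv
    have h4 : 1 ≤ Tv.card := Finset.card_pos.mpr ⟨e0, he0Tv⟩
    omega
  have hAwcard : Aw.card + 2 = 2 * Tw.card := by
    have hdisj : ∀ t1 ∈ Tw.erase e0, ∀ t2 ∈ Tw.erase e0, t1 ≠ t2 →
        Disjoint (t1.erase w) (t2.erase w) := by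
      intro t1 h1 t2 h2 hne
      have h1' := Finset.mem_of_mem_erase h1
      have h2' := Finset.mem_of_mem_erase h2
      rw [hTwdef] at h1' h2'
      obtain ⟨h1E, h1w, h1c⟩ := Finset.mem_filter.mp h1'
      obtain ⟨h2E, h2w, h2c⟩ := Finset.mem_filter.mp h2'
      have m1 : t1.erase w ∈ linkEdges E w :=
        Finset.mem_image_of_mem _ (Finset.mem_filter.mpr ⟨h1E, h1w⟩)
      have m2 : t2.erase w ∈ linkEdges E w :=
        Finset.mem_image_of_mem _ (Finset.mem_filter.mpr ⟨h2E, h2w⟩)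
      have c1 : (t1.erase w).card = 2 := by rw [Finset.card_erase_of_mem h1w, h1c]
      have c2 : (t2.erase w).card = 2 := by rw [Finset.card_erase_of_mem h2w, h2c]
      refine hMw _ m1 _ m2 c1 c2 ?_
      intro h
      exact hne (by rw [← Finset.insert_erase h1w, h, Finset.insert_erase h2w])
    have h1 : Aw.card = ∑ t ∈ Tw.erase e0, (t.erase w).card := by
      rw [hAwdef]; exact Finset.card_biUnion hdisj
    have h2 : ∀ t ∈ Tw.erase e0, (t.erase w).card = 2 := by
      intro t ht
      have ht' := Finset.mem_of_mem_erase ht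
      rw [hTwdef] at ht'
      obtain ⟨htE, hwt, htc⟩ := Finset.mem_filter.mp ht'
      rw [Finset.card_erase_of_mem hwt, htc]
    rw [Finset.sum_congr rfl h2, Finset.sum_const, smul_eq_mul] at h1
    have h3 : (Tw.erase e0).card = Tw.card - 1 := Finset.card_erase_of_mem he0Tw
    have h4 : 1 ≤ Tw.card := Finset.card_pos.mpr ⟨e0, he0Tw⟩
    omega
  -- bound the 2-degree of x
  have hxAA : x ∉ A ∪ Aw := by
    intro h
    rcases Finset.mem_union.mp h with h | h
    · exact (hAmem x h).2.2.2.1 rfl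
    · exact (hAwmem x h).2.2.2.1 rfl
  have hAAnon : ∀ y ∈ A ∪ Aw, ({x, y} : Finset (Fin n)) ∉ E := by
    intro y hy
    rcases Finset.mem_union.mp hy with h | h
    · exact (hAmem y h).1
    · exact (hAwmem y h).1
  have hxbound : degI E 2 x + (A ∪ Aw).card ≤ n - 1 := deg2_bound hxAA hAAnon
  have hFcard : (A ∪ Aw).card = A.card + Aw.card := Finset.card_union_of_disjoint hdisjAAw
  -- the link graph of x
  set P := (Tx.erase e0).image (fun t => t.erase x) with hPdef
  have hPmem : ∀ p ∈ P, x ∉ p ∧ v ∉ p ∧ w ∉ p ∧ p.card = 2 ∧ insert x p ∈ E := by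
    intro p hp
    rw [hPdef] at hp
    obtain ⟨t, ht, rfl⟩ := Finset.mem_image.mp hp
    obtain ⟨hvnt, hwnt⟩ := hTxfacts t ht
    have ht' := Finset.mem_of_mem_erase ht
    rw [hTxdef] at ht'
    obtain ⟨htE, hxt, htc⟩ := Finset.mem_filter.mp ht'
    refine ⟨Finset.notMem_erase _ _, fun h => hvnt (Finset.mem_of_mem_erase h),
      fun h => hwnt (Finset.mem_of_mem_erase h),
      by rw [Finset.card_erase_of_mem hxt, htc],
      by rw [Finset.insert_erase hxt]; exact htE⟩
  have hPcard : P.card + 1 = Tx.card := by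
    have hinj : Set.InjOn (fun t : Finset (Fin n) => t.erase x) (Tx.erase e0) := by
      intro t1 h1 t2 h2 h
      have hx1 : x ∈ t1 := by
        have := Finset.mem_of_mem_erase h1; rw [hTxdef] at this
        exact (Finset.mem_filter.mp this).2.1
      have hx2 : x ∈ t2 := by
        have := Finset.mem_of_mem_erase h2; rw [hTxdef] at this
        exact (Finset.mem_filter.mp this).2.1
      have h' : t1.erase x = t2.erase x := h
      rw [← Finset.insert_erase hx1, h', Finset.insert_erase hx2]
    rw [hPdef, Finset.card_image_of_injOn hinj, Finset.card_erase_of_mem he0Tx]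
    have : 1 ≤ Tx.card := Finset.card_pos.mpr ⟨e0, he0Tx⟩
    omega
  set VL := P.biUnion id with hVLdef
  have hVLmem : ∀ y ∈ VL, y ≠ v ∧ ({v, y} : Finset (Fin n)) ∉ E := by
    intro y hy
    rw [hVLdef] at hy
    obtain ⟨p, hp, hyp⟩ := Finset.mem_biUnion.mp hy
    simp only [id_eq] at hyp
    obtain ⟨hxp, hvp, hwp, hpc, hins⟩ := hPmem p hp
    obtain ⟨z, hzy, hprepr⟩ := card2_repr hyp hpc
    have hyv : y ≠ v := fun h => hvp (h ▸ hyp)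
    have hyw : y ≠ w := fun h => hwp (h ▸ hyp)
    have hyx : y ≠ x := fun h => hxp (h ▸ hyp)
    have hzp : z ∈ p := by rw [hprepr]; simp
    have hzv : z ≠ v := fun h => hvp (h ▸ hzp)
    have hzw : z ≠ w := fun h => hwp (h ▸ hzp)
    have hzx : z ≠ x := fun h => hxp (h ▸ hzp)
    have ht2 : ({x, y, z} : Finset (Fin n)) ∈ E := by
      have h : insert x p = {x, y, z} := by rw [hprepr]
      rw [← h]; exact hins
    have ht1 : ({x, v, w} : Finset (Fin n)) ∈ E := by
      have h : ({x, v, w} : Finset (Fin n)) = {v, w, x} := by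
        ext s; simp only [Finset.mem_insert, Finset.mem_singleton]; tauto
      rw [h, ← he0repr]; exact he0E
    exact ⟨hyv, noB hC hB hxv hxw (Ne.symm hyx) (Ne.symm hzx) hvw (Ne.symm hyv)
      (Ne.symm hzv) (Ne.symm hyw) (Ne.symm hzw) (Ne.symm hzy) ht1 ht2⟩
  have hvVL : v ∉ VL := fun h => (hVLmem v h).1 rfl
  have hvbound : degI E 2 v + VL.card ≤ n - 1 :=
    deg2_bound hvVL (fun y hy => (hVLmem y hy).2)
  -- every link edge of x has an endpoint of link-degree ≤ 2
  have hPedge : ∀ p ∈ P, ∃ y ∈ p, (P.filter (fun q => y ∈ q)).card ≤ 2 := by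
    intro p hp
    by_contra hcon
    push_neg at hcon
    obtain ⟨hxp, hvp, hwp, hpc, hins⟩ := hPmem p hp
    obtain ⟨y, z, hyz, hprepr⟩ := Finset.card_eq_two.mp hpc
    have hyp : y ∈ p := by rw [hprepr]; simp
    have hzp : z ∈ p := by rw [hprepr]; simp
    have hy3 : 3 ≤ (P.filter (fun q => y ∈ q)).card := hcon y hyp
    have hz3 : 3 ≤ (P.filter (fun q => z ∈ q)).card := hcon z hzp
    have hpy : p ∈ P.filter (fun q => y ∈ q) := Finset.mem_filter.mpr ⟨hp, hyp⟩
    have hpz : p ∈ P.filter (fun q => z ∈ q) := Finset.mem_filter.mpr ⟨hp, hzp⟩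
    have h2y : 1 < ((P.filter (fun q => y ∈ q)).erase p).card := by
      rw [Finset.card_erase_of_mem hpy]; omega
    obtain ⟨p1, hp1, p2, hp2, hp12⟩ := Finset.one_lt_card.mp h2y
    have h1z : 0 < ((P.filter (fun q => z ∈ q)).erase p).card := by
      rw [Finset.card_erase_of_mem hpz]; omega
    obtain ⟨p3, hp3⟩ := Finset.card_pos.mp h1z
    have up : ∀ pi, pi ∈ (P.filter (fun q => y ∈ q)).erase p →
        ∃ zi, zi ≠ y ∧ zi ≠ z ∧ pi = {y, zi} ∧ ({y, zi} : Finset (Fin n)) ∈ P := by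
      intro pi hpi
      obtain ⟨hpine, hpif⟩ := Finset.mem_erase.mp hpi
      obtain ⟨hpiP, hypi⟩ := Finset.mem_filter.mp hpif
      obtain ⟨_, _, _, hpic, _⟩ := hPmem pi hpiP
      obtain ⟨zi, hziy, hpirepr⟩ := card2_repr hypi hpic
      refine ⟨zi, hziy, ?_, hpirepr, hpirepr ▸ hpiP⟩
      intro h
      exact hpine (by rw [hpirepr, h, ← hprepr])
    obtain ⟨z1, hz1y, hz1z, hp1r, hp1P⟩ := up p1 hp1
    obtain ⟨z2, hz2y, hz2z, hp2r, hp2P⟩ := up p2 hp2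
    have hz12 : z1 ≠ z2 := fun h => hp12 (by rw [hp1r, hp2r, h])
    obtain ⟨hp3ne, hp3f⟩ := Finset.mem_erase.mp hp3
    obtain ⟨hp3P, hzp3⟩ := Finset.mem_filter.mp hp3f
    obtain ⟨hxp3, hvp3, hwp3, hp3c, hins3⟩ := hPmem p3 hp3P
    obtain ⟨q, hqz, hp3r⟩ := card2_repr hzp3 hp3c
    have hqy : q ≠ y := by
      intro h
      apply hp3ne
      rw [hp3r, h, hprepr, Finset.pair_comm]
    obtain ⟨zj, hzjP, hzjy, hzjz, hzjq⟩ :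
        ∃ zj, ({y, zj} : Finset (Fin n)) ∈ P ∧ zj ≠ y ∧ zj ≠ z ∧ zj ≠ q := by
      by_cases h : z1 = q
      · exact ⟨z2, hp2P, hz2y, hz2z, fun hh => hz12 (by rw [h, ← hh])⟩
      · exact ⟨z1, hp1P, hz1y, hz1z, h⟩
    have hxy : x ≠ y := fun h => hxp (h ▸ hyp)
    have hxz : x ≠ z := fun h => hxp (h ▸ hzp)
    have hqp3 : q ∈ p3 := by rw [hp3r]; simp
    have hxq : x ≠ q := fun h => hxp3 (h ▸ hqp3)
    have hxzj : x ≠ zj := by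
      have hh := (hPmem _ hzjP).1
      intro h
      exact hh (by rw [h]; simp)
    have ht1 : ({x, z, q} : Finset (Fin n)) ∈ E := by
      have h : insert x p3 = {x, z, q} := by rw [hp3r]
      rw [← h]; exact hins3
    have ht2 : ({x, y, zj} : Finset (Fin n)) ∈ E := (hPmem _ hzjP).2.2.2.2
    have hnedge := noB hC hB hxz hxq hxy hxzj (Ne.symm hqz) (Ne.symm hyz) (Ne.symm hzjz)
      hqy (Ne.symm hzjq) (Ne.symm hzjy) ht1 ht2
    apply hnedge
    have hpE : p ∈ E := hC _ hins _ (Finset.subset_insert x p)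
    have h : ({z, y} : Finset (Fin n)) = p := by rw [hprepr, Finset.pair_comm z y]
    rw [h]; exact hpE
  -- fiberwise count: P.card ≤ 2 * VL.card
  have hPVL : P.card ≤ 2 * VL.card := by
    set f : Finset (Fin n) → Fin n :=
      fun p => if h : ∃ y, y ∈ p ∧ (P.filter (fun q => y ∈ q)).card ≤ 2 then h.choose else x
      with hfdef
    have hfspec : ∀ p ∈ P, f p ∈ p ∧ (P.filter (fun q => f p ∈ q)).card ≤ 2 := by
      intro p hp
      obtain ⟨y, hy1, hy2⟩ := hPedge p hp
      have hex : ∃ y, y ∈ p ∧ (P.filter (fun q => y ∈ q)).card ≤ 2 := ⟨y, hy1, hy2⟩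
      rw [hfdef]
      simp only [dif_pos hex]
      exact hex.choose_spec
    have hmapsto : ∀ p ∈ P, f p ∈ VL := by
      intro p hp
      rw [hVLdef]
      exact Finset.mem_biUnion.mpr ⟨p, hp, (hfspec p hp).1⟩
    have hsum : P.card = ∑ y ∈ VL, (P.filter (fun p => f p = y)).card :=
      Finset.card_eq_sum_card_fiberwise hmapsto
    have hbd : ∀ y ∈ VL, (P.filter (fun p => f p = y)).card ≤ 2 := by
      intro y hyVL
      rcases Finset.eq_empty_or_nonempty (P.filter (fun p => f p = y)) with h | h
      · rw [h]; simp
      · obtain ⟨p0, hp0⟩ := h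
        obtain ⟨hp0P, hfp0⟩ := Finset.mem_filter.mp hp0
        have hle : (P.filter (fun p => f p = y)) ⊆ (P.filter (fun q => y ∈ q)) := by
          intro q hq
          obtain ⟨hqP, hfq⟩ := Finset.mem_filter.mp hq
          exact Finset.mem_filter.mpr ⟨hqP, hfq ▸ (hfspec q hqP).1⟩
        calc (P.filter (fun p => f p = y)).card
            ≤ (P.filter (fun q => y ∈ q)).card := Finset.card_le_card hle
          _ ≤ 2 := hfp0 ▸ (hfspec p0 hp0P).2
    calc P.card = ∑ y ∈ VL, (P.filter (fun p => f p = y)).card := hsum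
      _ ≤ ∑ _y ∈ VL, 2 := Finset.sum_le_sum hbd
      _ = 2 * VL.card := by rw [Finset.sum_const, smul_eq_mul, mul_comm]
  -- degree split
  have hsplit : ∀ u : Fin n, dDeg E u = degI E 2 u + degI E 3 u := by
    intro u
    have hunion : E.filter (fun e => u ∈ e ∧ 2 ≤ e.card) =
        E.filter (fun e => u ∈ e ∧ e.card = 2) ∪ E.filter (fun e => u ∈ e ∧ e.card = 3) := by
      ext e
      simp only [Finset.mem_filter, Finset.mem_union]
      constructor
      · rintro ⟨heE, hue, hcard⟩
        have h3 := hsize e heE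
        rcases Nat.lt_or_ge e.card 3 with h | h
        · exact Or.inl ⟨heE, hue, by omega⟩
        · exact Or.inr ⟨heE, hue, by omega⟩
      · rintro (⟨heE, hue, hc⟩ | ⟨heE, hue, hc⟩) <;> exact ⟨heE, hue, by omega⟩
    have hdisj2 : Disjoint (E.filter (fun e => u ∈ e ∧ e.card = 2))
        (E.filter (fun e => u ∈ e ∧ e.card = 3)) := by
      rw [Finset.disjoint_left]
      intro e he1 he2
      have h1 := (Finset.mem_filter.mp he1).2.2
      have h2 := (Finset.mem_filter.mp he2).2.2
      omega
    unfold dDeg degI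
    rw [hunion, Finset.card_union_of_disjoint hdisj2]
  -- collect the numeric facts
  have hkv : degI E 3 v = Tv.card := by rw [hTvdef]; rfl
  have hkx : degI E 3 x = Tx.card := by rw [hTxdef]; rfl
  have hsv := hsplit v
  have hsx := hsplit x
  rw [hkv] at hsv
  rw [hkx] at hsx
  have hdv := hdeg v
  have hdx := hdeg x
  have hTw1 : 1 ≤ Tw.card := Finset.card_pos.mpr ⟨e0, he0Tw⟩
  have hTv1 : 1 ≤ Tv.card := Finset.card_pos.mpr ⟨e0, he0Tv⟩
  have H1 : degI E 2 x + A.card + Aw.card + 1 ≤ n := by omega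
  have H2 : degI E 2 v + VL.card + 1 ≤ n := by omega
  -- cast everything to the reals
  have R1 : (degI E 2 x : ℝ) + A.card + Aw.card + 1 ≤ n := by exact_mod_cast H1
  have R2 : (degI E 2 v : ℝ) + VL.card + 1 ≤ n := by exact_mod_cast H2
  have R3 : (P.card : ℝ) ≤ 2 * VL.card := by exact_mod_cast hPVL
  have R4 : (P.card : ℝ) + 1 = Tx.card := by exact_mod_cast hPcard
  have R5 : (A.card : ℝ) + 2 = 2 * Tv.card := by exact_mod_cast hAcard
  have R6 : (Aw.card : ℝ) + 2 = 2 * Tw.card := by exact_mod_cast hAwcard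
  have R7 : (1 : ℝ) ≤ Tw.card := by exact_mod_cast hTw1
  have RV : (dDeg E v : ℝ) = degI E 2 v + Tv.card := by exact_mod_cast hsv
  have RX : (dDeg E x : ℝ) = degI E 2 x + Tx.card := by exact_mod_cast hsx
  have RN : (20 : ℝ) ≤ n := by exact_mod_cast hn
  linarith
end

section
/- There is n0 ∈ ℕ such that the following holds for every n ≥ n0. Let H be a B-free simplicial complex on n vertices in which every edge has size at most 3 and every vertex u satisfies d(u) > (9/8)(n−1) + 5/16. Then there do not exist vertices v0, v1, v2, v3 of H such that the 2-edges of the link L_{v0} are pairwise disjoint and, for each j ∈ {1,2,3}, the vertex v_{j−1} is a tip of a star in the link L_{v_j}. -/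
open Finset

/-- `w` is a tip of a star in the link `L_v` -/
def TipOfStar {V : Type*} [DecidableEq V] (E : Finset (Finset V)) (v w : V) : Prop :=
  ∃ x y : V, w ≠ x ∧ x ≠ y ∧ y ≠ w ∧
    ({w, x} : Finset V) ∈ linkEdges E v ∧ ({x, y} : Finset V) ∈ linkEdges E v

section Helpers19

variable {n : ℕ}

lemma bcopy {E : Finset (Finset (Fin n))} (hC : IsComplex E) (p q r s t : Fin n)
    (hpq : p ≠ q) (hpr : p ≠ r) (hps : p ≠ s) (hpt : p ≠ t)
    (hqr : q ≠ r) (hqs : q ≠ s) (hqt : q ≠ t)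
    (hrs : r ≠ s) (hrt : r ≠ t) (hst : s ≠ t)
    (h1 : ({p,q,r} : Finset (Fin n)) ∈ E) (h2 : ({p,s,t} : Finset (Fin n)) ∈ E)
    (h3 : ({r,s} : Finset (Fin n)) ∈ E) : HasCopy B E := by
  refine ⟨![p,q,r,s,t], ?_, ?_⟩
  · intro i j hij
    fin_cases i <;> fin_cases j <;> simp_all
  · intro e he
    simp only [B, dClosure, mem_biUnion, mem_powerset, mem_insert, mem_singleton] at he
    obtain ⟨g, hg, hsub⟩ := he
    have himg : e.image ![p,q,r,s,t] ⊆ g.image ![p,q,r,s,t] := Finset.image_subset_image hsub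
    rcases hg with rfl | rfl | rfl
    · have : ({2,3} : Finset (Fin 5)).image ![p,q,r,s,t] = {r,s} := by
        simp
      rw [this] at himg
      exact hC _ h3 _ himg
    · have : ({0,1,2} : Finset (Fin 5)).image ![p,q,r,s,t] = {p,q,r} := by
        simp
      rw [this] at himg
      exact hC _ h1 _ himg
    · have : ({0,3,4} : Finset (Fin 5)).image ![p,q,r,s,t] = {p,s,t} := by
        simp
      rw [this] at himg
      exact hC _ h2 _ himg

lemma tri_perm {a b c a' b' c' : Fin n} (h : ∀ x, (x = a ∨ x = b ∨ x = c) ↔ (x = a' ∨ x = b' ∨ x = c')) :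
    ({a,b,c} : Finset (Fin n)) = {a',b',c'} := by
  ext x; simp only [mem_insert, mem_singleton]; exact h x

lemma cross_not {E : Finset (Finset (Fin n))} (hC : IsComplex E) (hB : ¬ HasCopy B E)
    {u a b c d : Fin n}
    (hab : a ≠ b) (hcd : c ≠ d) (hua : u ≠ a) (hub : u ≠ b) (huc : u ≠ c) (hud : u ≠ d)
    (hac : a ≠ c) (had : a ≠ d) (hbc : b ≠ c) (hbd : b ≠ d)
    (h1 : ({u,a,b} : Finset (Fin n)) ∈ E) (h2 : ({u,c,d} : Finset (Fin n)) ∈ E) :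
    ({a,c} : Finset (Fin n)) ∉ E := by
  intro hE
  have h1' : ({u,b,a} : Finset (Fin n)) ∈ E := by
    rwa [Finset.pair_comm b a]
  exact hB (bcopy hC u b a c d hub hua huc hud hab.symm hbc hbd hac had hcd h1' h2 hE)

lemma pair_of_mem {g : Finset (Fin n)} {x : Fin n} (h2 : g.card = 2) (hx : x ∈ g) :
    ∃ a, a ≠ x ∧ g = {x, a} := by
  obtain ⟨c, d, hcd, rfl⟩ := Finset.card_eq_two.mp h2
  rcases Finset.mem_insert.mp hx with rfl | hx'
  · exact ⟨d, fun h => hcd h.symm, rfl⟩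
  · rcases Finset.mem_singleton.mp hx' with rfl
    exact ⟨c, hcd, Finset.pair_comm c x⟩

lemma pair_mem_of_subset_tri {e : Finset (Fin n)} {x y a : Fin n}
    (hc : e.card = 2) (hsub : e ⊆ ({x,y,a} : Finset (Fin n)))
    (hxy : x ≠ y) (hax : a ≠ x) (hay : a ≠ y) :
    e = {x,y} ∨ e = {x,a} ∨ e = {y,a} := by
  obtain ⟨c, d, hcd, rfl⟩ := Finset.card_eq_two.mp hc
  have hcm := hsub (Finset.mem_insert_self c {d})
  have hdm := hsub (Finset.mem_insert_of_mem (Finset.mem_singleton_self d))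
  simp only [mem_insert, mem_singleton] at hcm hdm
  rcases hcm with rfl | rfl | rfl <;> rcases hdm with rfl | rfl | rfl <;>
    first
      | exact absurd rfl hcd
      | exact Or.inl rfl
      | exact Or.inr (Or.inl rfl)
      | exact Or.inr (Or.inr rfl)
      | exact Or.inl (Finset.pair_comm _ _)
      | exact Or.inr (Or.inl (Finset.pair_comm _ _))
      | exact Or.inr (Or.inr (Finset.pair_comm _ _))

lemma crossfree_card_le :
    ∀ (F : Finset (Finset (Fin n))),
      (∀ f ∈ F, f.card = 2) →
      (∀ f ∈ F, ∀ g ∈ F, Disjoint f g → ∀ x ∈ f, ∀ y ∈ g, ({x,y} : Finset (Fin n)) ∉ F) →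
      F.card ≤ (F.biUnion id).card := by
  intro F
  induction F using Finset.strongInduction with
  | _ F ih =>
  intro h2 hcf
  rcases F.eq_empty_or_nonempty with rfl | ⟨f, hf⟩
  · simp
  obtain ⟨x, y, hxy, hfeq⟩ := Finset.card_eq_two.mp (h2 f hf)
  subst hfeq
  -- private vertex case, as a reusable claim
  have private_case : ∀ z w : Fin n, ({z,w} : Finset (Fin n)) ∈ F →
      (∀ g ∈ F, z ∈ g → g = {z,w}) → F.card ≤ (F.biUnion id).card := by
    intro z w hzw hz
    set F' := F.erase {z,w} with hF'def
    have hss : F' ⊂ F := Finset.erase_ssubset hzw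
    have hsub : F'.biUnion id ⊆ (F.biUnion id).erase z := by
      intro u hu
      simp only [mem_biUnion, id_eq] at hu
      obtain ⟨g, hg, hug⟩ := hu
      have hgF : g ∈ F := Finset.mem_of_mem_erase hg
      have hgne : g ≠ {z,w} := Finset.ne_of_mem_erase hg
      refine Finset.mem_erase.mpr ⟨?_, Finset.mem_biUnion.mpr ⟨g, hgF, hug⟩⟩
      rintro rfl
      exact hgne (hz g hgF hug)
    have hzmem : z ∈ F.biUnion id := Finset.mem_biUnion.mpr ⟨{z,w}, hzw, by simp⟩
    have hcard1 : F'.card + 1 = F.card := Finset.card_erase_add_one hzw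
    have hih : F'.card ≤ (F'.biUnion id).card :=
      ih F' hss (fun g hg => h2 g (Finset.mem_of_mem_erase hg))
        (fun g hg g' hg' hd a ha b hb hmem =>
          hcf g (Finset.mem_of_mem_erase hg) g' (Finset.mem_of_mem_erase hg') hd a ha b hb
            (Finset.mem_of_mem_erase hmem))
    have hle : (F'.biUnion id).card ≤ ((F.biUnion id).erase z).card :=
      Finset.card_le_card hsub
    have herase : ((F.biUnion id).erase z).card + 1 = (F.biUnion id).card :=
      Finset.card_erase_add_one hzmem
    omega
  by_cases hx : ∀ g ∈ F, x ∈ g → g = {x,y}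
  · exact private_case x y hf hx
  by_cases hy : ∀ g ∈ F, y ∈ g → g = {x,y}
  · have hf' : ({y,x} : Finset (Fin n)) ∈ F := by rwa [Finset.pair_comm]
    have hy' : ∀ g ∈ F, y ∈ g → g = {y,x} := by
      intro g hg hyg; rw [hy g hg hyg]; exact Finset.pair_comm x y
    exact private_case y x hf' hy'
  push_neg at hx hy
  obtain ⟨g, hgF, hxg, hgne⟩ := hx
  obtain ⟨h', hhF, hyh, hhne⟩ := hy
  obtain ⟨a, hax, hgeq⟩ := pair_of_mem (h2 g hgF) hxg
  have hay : a ≠ y := by rintro rfl; exact hgne hgeq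
  subst hgeq
  obtain ⟨b, hby, hheq⟩ := pair_of_mem (h2 h' hhF) hyh
  have hbx : b ≠ x := by
    intro h
    apply hhne
    rw [hheq, h]
    exact Finset.pair_comm y x
  subst hheq
  -- show b = a
  have hba : b = a := by
    by_contra hba
    have hd : Disjoint ({y,b} : Finset (Fin n)) ({x,a} : Finset (Fin n)) := by
      simp only [Finset.disjoint_left, mem_insert, mem_singleton]
      rintro u (rfl | rfl) <;> push_neg <;>
        exact ⟨by intro h; first | exact hxy h.symm | exact hbx h, 
               by intro h; first | exact hay h.symm | exact hba h⟩
    have := hcf _ hhF _ hgF hd y (by simp) x (by simp)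
    exact this (by rwa [Finset.pair_comm])
  subst hba
  -- here a is gone; edges: {x,y} ∈ F, {x,b} ∈ F (was g), {y,b} ∈ F (was h')
  have hT1 : ({x,y} : Finset (Fin n)) ∈ F := hf
  have hT2 : ({x,b} : Finset (Fin n)) ∈ F := hgF
  have hT3 : ({y,b} : Finset (Fin n)) ∈ F := hhF
  have hbx' : b ≠ x := hbx
  have hby' : b ≠ y := hby
  -- claim: every edge touching {x,y,b} is inside it
  have claim : ∀ e ∈ F, ∀ z ∈ e, (z = x ∨ z = y ∨ z = b) → e ⊆ ({x,y,b} : Finset (Fin n)) := by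
    intro e heF z hze hz
    rcases hz with rfl | rfl | rfl
    · obtain ⟨d, hdz, hed⟩ := pair_of_mem (h2 e heF) hze
      subst hed
      have hd2 : d = y ∨ d = b := by
        by_contra hd
        push_neg at hd
        have hdis : Disjoint ({z,d} : Finset (Fin n)) ({y,b} : Finset (Fin n)) := by
          simp only [Finset.disjoint_left, mem_insert, mem_singleton]
          rintro u (rfl | rfl) <;> push_neg
          · exact ⟨hxy, fun h => hbx h.symm⟩
          · exact ⟨hd.1, hd.2⟩
        exact hcf _ heF _ hT3 hdis z (by simp) y (by simp) hT1
      intro u hu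
      simp only [mem_insert, mem_singleton] at hu ⊢
      rcases hu with rfl | rfl
      · exact Or.inl rfl
      · rcases hd2 with rfl | rfl
        · exact Or.inr (Or.inl rfl)
        · exact Or.inr (Or.inr rfl)
    · obtain ⟨d, hdz, hed⟩ := pair_of_mem (h2 e heF) hze
      subst hed
      have hd2 : d = x ∨ d = b := by
        by_contra hd
        push_neg at hd
        have hdis : Disjoint ({z,d} : Finset (Fin n)) ({x,b} : Finset (Fin n)) := by
          simp only [Finset.disjoint_left, mem_insert, mem_singleton]
          rintro u (rfl | rfl) <;> push_neg
          · exact ⟨fun h => hxy h.symm, fun h => hby h.symm⟩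
          · exact ⟨hd.1, hd.2⟩
        have := hcf _ heF _ hT2 hdis z (by simp) x (by simp)
        exact this (by rwa [Finset.pair_comm])
      intro u hu
      simp only [mem_insert, mem_singleton] at hu ⊢
      rcases hu with rfl | rfl
      · exact Or.inr (Or.inl rfl)
      · rcases hd2 with rfl | rfl
        · exact Or.inl rfl
        · exact Or.inr (Or.inr rfl)
    · obtain ⟨d, hdz, hed⟩ := pair_of_mem (h2 e heF) hze
      subst hed
      have hd2 : d = x ∨ d = y := by
        by_contra hd
        push_neg at hd
        have hdis : Disjoint ({z,d} : Finset (Fin n)) ({x,y} : Finset (Fin n)) := by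
          simp only [Finset.disjoint_left, mem_insert, mem_singleton]
          rintro u (rfl | rfl) <;> push_neg
          · exact ⟨hbx, hby⟩
          · exact ⟨hd.1, hd.2⟩
        have := hcf _ heF _ hT1 hdis z (by simp) x (by simp)
        exact this (by rwa [Finset.pair_comm])
      intro u hu
      simp only [mem_insert, mem_singleton] at hu ⊢
      rcases hu with rfl | rfl
      · exact Or.inr (Or.inr rfl)
      · rcases hd2 with rfl | rfl
        · exact Or.inl rfl
        · exact Or.inr (Or.inl rfl)
  set T : Finset (Finset (Fin n)) := {{x,y},{x,b},{y,b}} with hTdef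
  have hTsub : T ⊆ F := by
    intro e he
    simp only [hTdef, mem_insert, mem_singleton] at he
    rcases he with rfl | rfl | rfl <;> assumption
  have hTcard : T.card = 3 := by
    rw [hTdef]
    rw [Finset.card_insert_of_notMem, Finset.card_insert_of_notMem, Finset.card_singleton]
    · simp only [mem_singleton]
      intro h
      have : x ∈ ({y,b} : Finset (Fin n)) := by rw [← h]; simp
      simp only [mem_insert, mem_singleton] at this
      rcases this with h' | h' 
      · exact hxy h'
      · exact hbx h'.symm
    · simp only [mem_insert, mem_singleton]
      push_neg
      constructor
      · intro h
        have : y ∈ ({x,b} : Finset (Fin n)) := by rw [← h]; simp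
        simp only [mem_insert, mem_singleton] at this
        rcases this with h' | h'
        · exact hxy h'.symm
        · exact hby h'.symm
      · intro h
        have : x ∈ ({y,b} : Finset (Fin n)) := by rw [← h]; simp
        simp only [mem_insert, mem_singleton] at this
        rcases this with h' | h'
        · exact hxy h'
        · exact hbx h'.symm
  set F' := F \ T with hF'def
  have hss : F' ⊂ F := by
    refine Finset.ssubset_iff_of_subset (Finset.sdiff_subset) |>.mpr ?_
    exact ⟨{x,y}, hf, by simp [hF'def, hTdef]⟩
  have hT3' : ∀ e ∈ F', ∀ z ∈ e, ¬(z = x ∨ z = y ∨ z = b) := by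
    intro e he z hz hmem
    have heF : e ∈ F := (Finset.mem_sdiff.mp he).1
    have heT : e ∉ T := (Finset.mem_sdiff.mp he).2
    have hsub := claim e heF z hz hmem
    rcases pair_mem_of_subset_tri (h2 e heF) hsub hxy hbx hby with rfl | rfl | rfl <;>
      simp [hTdef] at heT
  have hsupp : F'.biUnion id ⊆ (F.biUnion id) \ ({x,y,b} : Finset (Fin n)) := by
    intro z hz
    simp only [mem_biUnion, id_eq] at hz
    obtain ⟨g', hg', hzg'⟩ := hz
    refine Finset.mem_sdiff.mpr ⟨Finset.mem_biUnion.mpr ⟨g', (Finset.mem_sdiff.mp hg').1, hzg'⟩, ?_⟩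
    intro hmem
    simp only [mem_insert, mem_singleton] at hmem
    exact hT3' g' hg' z hzg' hmem
  have hxmem : x ∈ F.biUnion id := Finset.mem_biUnion.mpr ⟨{x,y}, hT1, by simp⟩
  have hymem : y ∈ F.biUnion id := Finset.mem_biUnion.mpr ⟨{x,y}, hT1, by simp⟩
  have hbmem : b ∈ F.biUnion id := Finset.mem_biUnion.mpr ⟨{x,b}, hT2, by simp⟩
  have hxyb_sub : ({x,y,b} : Finset (Fin n)) ⊆ F.biUnion id := by
    intro z hz
    simp only [mem_insert, mem_singleton] at hz
    rcases hz with rfl | rfl | rfl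
    · exact hxmem
    · exact hymem
    · exact hbmem
  have hxyb_card : ({x,y,b} : Finset (Fin n)).card = 3 := by
    rw [Finset.card_insert_of_notMem, Finset.card_insert_of_notMem, Finset.card_singleton]
    · simp only [mem_singleton]; exact fun h => hby h.symm
    · simp only [mem_insert, mem_singleton]
      push_neg
      exact ⟨hxy, fun h => hbx h.symm⟩
  have hc1 : F'.card + T.card = F.card := Finset.card_sdiff_add_card_eq_card hTsub
  have hc2 : ((F.biUnion id) \ ({x,y,b} : Finset (Fin n))).card + ({x,y,b} : Finset (Fin n)).card
      = (F.biUnion id).card := Finset.card_sdiff_add_card_eq_card hxyb_sub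
  have hih : F'.card ≤ (F'.biUnion id).card :=
    ih F' hss (fun g hg => h2 g (Finset.mem_sdiff.mp hg).1)
      (fun g hg g' hg' hd a' ha' b' hb' hmem =>
        hcf g (Finset.mem_sdiff.mp hg).1 g' (Finset.mem_sdiff.mp hg').1 hd a' ha' b' hb'
          (Finset.mem_sdiff.mp hmem).1)
  have hle : (F'.biUnion id).card ≤ ((F.biUnion id) \ ({x,y,b} : Finset (Fin n))).card :=
    Finset.card_le_card hsupp
  omega

def Lk (E : Finset (Finset (Fin n))) (u : Fin n) : Finset (Finset (Fin n)) :=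
  (E.filter (fun e => u ∈ e ∧ e.card = 3)).image (fun e => e.erase u)

lemma card_Lk (E : Finset (Finset (Fin n))) (u : Fin n) : (Lk E u).card = degI E 3 u := by
  unfold Lk degI
  apply Finset.card_image_of_injOn
  intro e he e' he' heq
  simp only [Finset.mem_coe, mem_filter] at he he'
  change e.erase u = e'.erase u at heq
  have h1 : insert u (e.erase u) = e := Finset.insert_erase he.2.1
  have h2 : insert u (e'.erase u) = e' := Finset.insert_erase he'.2.1
  rw [← h1, ← h2, heq]

lemma Lk_spec {E : Finset (Finset (Fin n))} {u : Fin n} {f : Finset (Fin n)}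
    (hf : f ∈ Lk E u) : f.card = 2 ∧ u ∉ f ∧ insert u f ∈ E := by
  simp only [Lk, mem_image, mem_filter] at hf
  obtain ⟨e, ⟨he, hu, hc⟩, rfl⟩ := hf
  refine ⟨?_, Finset.notMem_erase u e, ?_⟩
  · rw [Finset.card_erase_of_mem hu, hc]
  · rw [Finset.insert_erase hu]; exact he

lemma Lk_of {E : Finset (Finset (Fin n))} {u : Fin n} {f : Finset (Fin n)}
    (hE : insert u f ∈ E) (hc : f.card = 2) (hu : u ∉ f) : f ∈ Lk E u := by
  simp only [Lk, mem_image, mem_filter]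
  exact ⟨insert u f, ⟨hE, Finset.mem_insert_self u f,
    by rw [Finset.card_insert_of_notMem hu, hc]⟩, Finset.erase_insert hu⟩

lemma Lk_mem_E {E : Finset (Finset (Fin n))} (hC : IsComplex E) {u : Fin n} {f : Finset (Fin n)}
    (hf : f ∈ Lk E u) : f ∈ E := by
  obtain ⟨_, _, hins⟩ := Lk_spec hf
  exact hC _ hins _ (Finset.subset_insert u f)

lemma Lk_sub_linkEdges {E : Finset (Finset (Fin n))} {u : Fin n} :
    Lk E u ⊆ linkEdges E u := by
  intro f hf
  simp only [Lk, mem_image, mem_filter] at hf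
  obtain ⟨e, ⟨he, hu, _⟩, rfl⟩ := hf
  simp only [linkEdges, mem_image, mem_filter]
  exact ⟨e, ⟨he, hu⟩, rfl⟩

lemma linkEdges_pair_mem_Lk {E : Finset (Finset (Fin n))} {u a b : Fin n} (hab : a ≠ b)
    (h : ({a,b} : Finset (Fin n)) ∈ linkEdges E u) : ({a,b} : Finset (Fin n)) ∈ Lk E u := by
  simp only [linkEdges, mem_image, mem_filter] at h
  obtain ⟨e, ⟨he, hu⟩, herase⟩ := h
  simp only [Lk, mem_image, mem_filter]
  refine ⟨e, ⟨he, hu, ?_⟩, herase⟩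
  have : (e.erase u).card = 2 := by rw [herase]; exact Finset.card_pair hab
  have h2 : (e.erase u).card = e.card - 1 := Finset.card_erase_of_mem hu
  have hpos : 1 ≤ e.card := Finset.card_pos.mpr ⟨u, hu⟩
  omega

lemma deg2_eq (E : Finset (Finset (Fin n))) (u : Fin n) :
    degI E 2 u = (Finset.univ.filter (fun w => w ≠ u ∧ ({u,w} : Finset (Fin n)) ∈ E)).card := by
  unfold degI
  have heq : E.filter (fun e => u ∈ e ∧ e.card = 2)
      = (Finset.univ.filter (fun w => w ≠ u ∧ ({u,w} : Finset (Fin n)) ∈ E)).image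
        (fun w => ({u,w} : Finset (Fin n))) := by
    ext e
    simp only [mem_filter, mem_image, Finset.mem_univ, true_and]
    constructor
    · rintro ⟨he, hu, hc⟩
      obtain ⟨w, hwu, rfl⟩ := pair_of_mem hc hu
      exact ⟨w, ⟨hwu, he⟩, rfl⟩
    · rintro ⟨w, ⟨hwu, hE⟩, rfl⟩
      exact ⟨hE, Finset.mem_insert_self u _, Finset.card_pair (fun h => hwu h.symm)⟩
  rw [heq]
  apply Finset.card_image_of_injOn
  intro w hw w' hw' heq'
  simp only [Finset.mem_coe, mem_filter, Finset.mem_univ, true_and] at hw hw'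
  change ({u,w} : Finset (Fin n)) = {u,w'} at heq'
  have : w' ∈ ({u,w} : Finset (Fin n)) := by rw [heq']; simp
  simp only [mem_insert, mem_singleton] at this
  rcases this with h | h
  · exact absurd h hw'.1
  · exact h.symm

lemma deg2_le {E : Finset (Finset (Fin n))} {u : Fin n} (A : Finset (Fin n))
    (h : ∀ w, w ≠ u → ({u,w} : Finset (Fin n)) ∈ E → w ∈ A) : degI E 2 u ≤ A.card := by
  rw [deg2_eq]
  apply Finset.card_le_card
  intro w hw
  simp only [mem_filter, Finset.mem_univ, true_and] at hw
  exact h w hw.1 hw.2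

lemma dDeg_split {E : Finset (Finset (Fin n))} (hE3 : ∀ e ∈ E, e.card ≤ 3) (u : Fin n) :
    dDeg E u = degI E 2 u + degI E 3 u := by
  unfold dDeg degI
  have h : E.filter (fun e => u ∈ e ∧ 2 ≤ e.card)
      = E.filter (fun e => u ∈ e ∧ e.card = 2) ∪ E.filter (fun e => u ∈ e ∧ e.card = 3) := by
    ext e
    simp only [mem_filter, mem_union]
    constructor
    · rintro ⟨he, hu, h2⟩
      have h3 := hE3 e he
      rcases Nat.lt_or_ge e.card 3 with h' | h'
      · exact Or.inl ⟨he, hu, by omega⟩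
      · exact Or.inr ⟨he, hu, by omega⟩
    · rintro (⟨he, hu, hc⟩ | ⟨he, hu, hc⟩) <;> exact ⟨he, hu, by omega⟩
  rw [h, Finset.card_union_of_disjoint]
  rw [Finset.disjoint_left]
  intro e h1 h2
  simp only [mem_filter] at h1 h2
  omega

lemma pair_subset {s : Finset (Fin n)} {a b : Fin n} (ha : a ∈ s) (hb : b ∈ s) :
    ({a,b} : Finset (Fin n)) ⊆ s := by
  intro x hx
  simp only [mem_insert, mem_singleton] at hx
  rcases hx with rfl | rfl <;> assumption

lemma Lk_cross {E : Finset (Finset (Fin n))} (hC : IsComplex E) (hB : ¬ HasCopy B E)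
    {u : Fin n} {f g : Finset (Fin n)} (hf : f ∈ Lk E u) (hg : g ∈ Lk E u)
    (hd : Disjoint f g) : ∀ x ∈ f, ∀ y ∈ g, ({x,y} : Finset (Fin n)) ∉ E := by
  intro x hx y hy
  obtain ⟨hfc, huf, hfE⟩ := Lk_spec hf
  obtain ⟨hgc, hug, hgE⟩ := Lk_spec hg
  obtain ⟨b, hbx, hfeq⟩ := pair_of_mem hfc hx
  obtain ⟨d, hdy, hgeq⟩ := pair_of_mem hgc hy
  have hbf : b ∈ f := by rw [hfeq]; simp
  have hdg : d ∈ g := by rw [hgeq]; simp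
  have h1 : ({u,x,b} : Finset (Fin n)) ∈ E := by rw [hfeq] at hfE; exact hfE
  have h2 : ({u,y,d} : Finset (Fin n)) ∈ E := by rw [hgeq] at hgE; exact hgE
  exact cross_not hC hB hbx.symm hdy.symm
    (fun h => huf (by rw [h]; exact hx)) (fun h => huf (by rw [h]; exact hbf))
    (fun h => hug (by rw [h]; exact hy)) (fun h => hug (by rw [h]; exact hdg))
    (fun h => (Finset.disjoint_left.mp hd hx) (by rw [h]; exact hy))
    (fun h => (Finset.disjoint_left.mp hd hx) (by rw [h]; exact hdg))
    (fun h => (Finset.disjoint_left.mp hd hbf) (by rw [h]; exact hy))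
    (fun h => (Finset.disjoint_left.mp hd hbf) (by rw [h]; exact hdg))
    h1 h2

lemma Lk_sub_crossfree {E : Finset (Finset (Fin n))} (hC : IsComplex E) (hB : ¬ HasCopy B E)
    {u : Fin n} {F : Finset (Finset (Fin n))} (hsub : F ⊆ Lk E u) :
    F.card ≤ (F.biUnion id).card := by
  apply crossfree_card_le F (fun f hf => (Lk_spec (hsub hf)).1)
  intro f hf g hg hd x hx y hy hmem
  exact Lk_cross hC hB (hsub hf) (hsub hg) hd x hx y hy (Lk_mem_E hC (hsub hmem))


end Helpers19

set_option maxHeartbeats 0 in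
theorem statement19 : ∃ n0 : ℕ, ∀ n : ℕ, n0 ≤ n → ∀ E : Finset (Finset (Fin n)),
    IsComplex E → ¬ HasCopy B E →
    (∀ e ∈ E, e.card ≤ 3) →
    (∀ u : Fin n, (dDeg E u : ℝ) > 9 / 8 * ((n : ℝ) - 1) + 5 / 16) →
    ¬ ∃ v0 v1 v2 v3 : Fin n,
      (∀ e ∈ linkEdges E v0, ∀ e' ∈ linkEdges E v0,
        e.card = 2 → e'.card = 2 → e ≠ e' → Disjoint e e') ∧
      TipOfStar E v1 v0 ∧ TipOfStar E v2 v1 ∧ TipOfStar E v3 v2 := by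
  use 100
  intro n hn E hC hB hE3 hdeg
  rintro ⟨v0, v1, v2, v3, hmatch, tip1, tip2, tip3⟩
  obtain ⟨x1, y1, h0x1, hx1y1, hy1v0, hL11, hL12⟩ := tip1
  obtain ⟨x2, y2, h1x2, hx2y2, hy2v1, hL21, hL22⟩ := tip2
  obtain ⟨x3, y3, h2x3, hx3y3, hy3v2, hL31, hL32⟩ := tip3
  -- basic triangles
  have hT1L : ({v0,x1} : Finset (Fin n)) ∈ Lk E v1 := linkEdges_pair_mem_Lk h0x1 hL11
  obtain ⟨hT1c, hT1nm, T1mem⟩ := Lk_spec hT1L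
  -- T1mem : insert v1 {v0,x1} = {v1,v0,x1} ∈ E
  have hv1v0 : v1 ≠ v0 := fun h => hT1nm (by rw [h]; simp)
  have hv1x1 : v1 ≠ x1 := fun h => hT1nm (by rw [h]; simp)
  have hPL : ({v1,x2} : Finset (Fin n)) ∈ Lk E v2 := linkEdges_pair_mem_Lk h1x2 hL21
  obtain ⟨hPc, hPnm, Pmem⟩ := Lk_spec hPL
  have hv2v1 : v2 ≠ v1 := fun h => hPnm (by rw [h]; simp)
  have hv2x2 : v2 ≠ x2 := fun h => hPnm (by rw [h]; simp)
  have hQL : ({x2,y2} : Finset (Fin n)) ∈ Lk E v2 := linkEdges_pair_mem_Lk hx2y2 hL22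
  obtain ⟨hQc, hQnm, Qmem⟩ := Lk_spec hQL
  have hv2y2 : v2 ≠ y2 := fun h => hQnm (by rw [h]; simp)
  have hRL : ({v2,x3} : Finset (Fin n)) ∈ Lk E v3 := linkEdges_pair_mem_Lk h2x3 hL31
  obtain ⟨hRc, hRnm, Rmem⟩ := Lk_spec hRL
  have hv3v2 : v3 ≠ v2 := fun h => hRnm (by rw [h]; simp)
  have hv3x3 : v3 ≠ x3 := fun h => hRnm (by rw [h]; simp)
  have hSL : ({x3,y3} : Finset (Fin n)) ∈ Lk E v3 := linkEdges_pair_mem_Lk hx3y3 hL32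
  obtain ⟨hSc, hSnm, Smem⟩ := Lk_spec hSL
  have hv3y3 : v3 ≠ y3 := fun h => hSnm (by rw [h]; simp)
  -- T1 with v0 first
  have T1mem' : ({v0,v1,x1} : Finset (Fin n)) ∈ E := by
    have : (insert v1 {v0,x1} : Finset (Fin n)) = {v0,v1,x1} := tri_perm (fun x => by tauto)
    rwa [this] at T1mem
  have T1mem'' : ({v1,v0,x1} : Finset (Fin n)) ∈ E := T1mem
  -- matching on Lk E v0
  have hM : ∀ f ∈ Lk E v0, ∀ g ∈ Lk E v0, f ≠ g → Disjoint f g := fun f hf g hg hne =>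
    hmatch f (Lk_sub_linkEdges hf) g (Lk_sub_linkEdges hg) (Lk_spec hf).1 (Lk_spec hg).1 hne
  have hMv1 : ({v1,x1} : Finset (Fin n)) ∈ Lk E v0 := by
    apply Lk_of
    · have : (insert v0 {v1,x1} : Finset (Fin n)) = {v0,v1,x1} := rfl
      rw [this]; exact T1mem'
    · exact Finset.card_pair hv1x1
    · simp only [mem_insert, mem_singleton]
      push_neg
      exact ⟨hv1v0.symm, h0x1⟩
  have huniq : ∀ f ∈ Lk E v0, v1 ∈ f → f = {v1,x1} := by
    intro f hf hv1f
    by_contra hne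
    exact (Finset.disjoint_left.mp (hM f hf _ hMv1 hne) hv1f) (by simp)
  have huniqx1 : ∀ f ∈ Lk E v0, x1 ∈ f → f = {v1,x1} := by
    intro f hf hx1f
    by_contra hne
    exact (Finset.disjoint_left.mp (hM f hf _ hMv1 hne) hx1f) (by simp)

  -- neighborhoods
  set Nv0 : Finset (Fin n) := Finset.univ.filter (fun w => w ≠ v0 ∧ ({v0,w} : Finset (Fin n)) ∈ E) with hNv0def
  have hNv0card : degI E 2 v0 = Nv0.card := deg2_eq E v0
  set Sset : Finset (Fin n) := (Finset.univ.erase v0) \ Nv0 with hSdef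
  have hNsub : Nv0 ⊆ Finset.univ.erase v0 := by
    intro w hw
    simp only [hNv0def, mem_filter, Finset.mem_univ, true_and] at hw
    exact Finset.mem_erase.mpr ⟨hw.1, Finset.mem_univ w⟩
  have hS1 : Sset.card + Nv0.card = (Finset.univ.erase v0).card :=
    Finset.card_sdiff_add_card_eq_card hNsub
  have hS2 : (Finset.univ.erase v0).card + 1 = n := by
    rw [Finset.card_erase_of_mem (Finset.mem_univ v0), Finset.card_univ, Fintype.card_fin]
    omega
  -- U and U'
  set U : Finset (Fin n) := (Lk E v0).biUnion id with hUdef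
  have hUcard : U.card = 2 * (Lk E v0).card := by
    rw [hUdef]
    have hid : (Lk E v0).biUnion id = (Lk E v0).biUnion (fun f => f) := rfl
    rw [hid, Finset.card_biUnion (fun f hf g hg hne => hM f hf g hg hne)]
    rw [Finset.sum_congr rfl (fun f hf => (Lk_spec hf).1)]
    rw [Finset.sum_const, smul_eq_mul]
    ring
  have hpairU : ({v1,x1} : Finset (Fin n)) ⊆ U := Finset.subset_biUnion_of_mem id hMv1
  set U' : Finset (Fin n) := U \ ({v1,x1} : Finset (Fin n)) with hU'def
  have hU'1 : U'.card + 2 = U.card := by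
    have := Finset.card_sdiff_add_card_eq_card hpairU
    rwa [Finset.card_pair hv1x1] at this
  -- d2(v1) bound
  set A1 : Finset (Fin n) := (Finset.univ.erase v1) \ U' with hA1def
  have hA1mem : ∀ w, w ≠ v1 → ({v1,w} : Finset (Fin n)) ∈ E → w ∈ A1 := by
    intro w hw hwe
    rw [hA1def]
    refine Finset.mem_sdiff.mpr ⟨Finset.mem_erase.mpr ⟨hw, Finset.mem_univ w⟩, ?_⟩
    intro hwU'
    rw [hU'def] at hwU'
    obtain ⟨hwU, hwp⟩ := Finset.mem_sdiff.mp hwU'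
    simp only [mem_insert, mem_singleton] at hwp
    push_neg at hwp
    obtain ⟨hwv1, hwx1⟩ := hwp
    rw [hUdef] at hwU
    simp only [Finset.mem_biUnion, id_eq] at hwU
    obtain ⟨f, hf, hwf⟩ := hwU
    obtain ⟨hfc, hv0f, hfE⟩ := Lk_spec hf
    obtain ⟨d, hdw, hfeq⟩ := pair_of_mem hfc hwf
    have hdf : d ∈ f := by rw [hfeq]; simp
    have hdv1 : d ≠ v1 := by
      rintro rfl
      have := huniq f hf hdf
      rw [this] at hwf
      simp only [mem_insert, mem_singleton] at hwf
      rcases hwf with h | h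
      · exact hwv1 h
      · exact hwx1 h
    have hdx1 : d ≠ x1 := by
      rintro rfl
      have := huniqx1 f hf hdf
      rw [this] at hwf
      simp only [mem_insert, mem_singleton] at hwf
      rcases hwf with h | h
      · exact hwv1 h
      · exact hwx1 h
    have h1 : ({v0,w,d} : Finset (Fin n)) ∈ E := by
      rw [hfeq] at hfE; exact hfE
    have := cross_not hC hB (u := v0) (a := w) (b := d) (c := v1) (d := x1)
      hdw.symm hv1x1 (fun h => hv0f (by rw [h]; exact hwf)) (fun h => hv0f (by rw [h]; exact hdf))
      hv1v0.symm h0x1 hwv1 hwx1 hdv1 hdx1 h1 T1mem'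
    exact this (by rwa [Finset.pair_comm] at hwe)
  have hU'sub : U' ⊆ Finset.univ.erase v1 := by
    intro w hw
    rw [hU'def] at hw
    obtain ⟨_, hwp⟩ := Finset.mem_sdiff.mp hw
    simp only [mem_insert, mem_singleton] at hwp
    push_neg at hwp
    exact Finset.mem_erase.mpr ⟨hwp.1, Finset.mem_univ w⟩
  have hA1card : A1.card + U'.card = (Finset.univ.erase v1).card :=
    Finset.card_sdiff_add_card_eq_card hU'sub
  have hA1card2 : (Finset.univ.erase v1).card + 1 = n := by
    rw [Finset.card_erase_of_mem (Finset.mem_univ v1), Finset.card_univ, Fintype.card_fin]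
    omega
  have hd2v1 : degI E 2 v1 ≤ A1.card := deg2_le A1 hA1mem

  -- Z : common triangle leaves of v1,x1
  set Z : Finset (Fin n) := Finset.univ.filter
    (fun z => z ≠ v0 ∧ z ≠ v1 ∧ z ≠ x1 ∧ ({v1,x1,z} : Finset (Fin n)) ∈ E) with hZdef
  have hZmem : ∀ z ∈ Z, z ≠ v0 ∧ z ≠ v1 ∧ z ≠ x1 ∧ ({v1,x1,z} : Finset (Fin n)) ∈ E := by
    intro z hz
    simpa [hZdef] using hz
  -- split L1
  set L1a : Finset (Finset (Fin n)) := (Lk E v1).filter (fun f => v0 ∈ f ∨ x1 ∈ f) with hL1adef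
  set L1b : Finset (Finset (Fin n)) := (Lk E v1).filter (fun f => ¬(v0 ∈ f ∨ x1 ∈ f)) with hL1bdef
  have hsplitL1 : L1a.card + L1b.card = (Lk E v1).card :=
    Finset.card_filter_add_card_filter_not (fun f => v0 ∈ f ∨ x1 ∈ f)
  have hL1a : L1a ⊆ (insert v0 Z).image (fun z => ({x1,z} : Finset (Fin n))) := by
    intro f hf
    rw [hL1adef] at hf
    obtain ⟨hfL1, hcase⟩ := Finset.mem_filter.mp hf
    obtain ⟨hfc, hv1f, hfE⟩ := Lk_spec hfL1
    by_cases hv0f : v0 ∈ f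
    · obtain ⟨d, hdv0, hfeq⟩ := pair_of_mem hfc hv0f
      have hdf : d ∈ f := by rw [hfeq]; simp
      have hdv1 : d ≠ v1 := fun h => hv1f (by rw [← h]; exact hdf)
      have hins : ({v0,v1,d} : Finset (Fin n)) ∈ E := by
        have : (insert v1 f : Finset (Fin n)) = {v0,v1,d} := by
          rw [hfeq]; exact tri_perm (fun x => by tauto)
        rwa [this] at hfE
      have hmem0 : ({v1,d} : Finset (Fin n)) ∈ Lk E v0 := by
        apply Lk_of
        · exact hins
        · exact Finset.card_pair hdv1.symm
        · simp only [mem_insert, mem_singleton]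
          push_neg
          exact ⟨hv1v0.symm, fun h => hdv0 h.symm⟩
      have heq := huniq _ hmem0 (by simp)
      have hdx1 : d = x1 := by
        have : x1 ∈ ({v1,d} : Finset (Fin n)) := by rw [heq]; simp
        simp only [mem_insert, mem_singleton] at this
        rcases this with h | h
        · exact absurd h.symm hv1x1
        · exact h.symm
      subst hdx1
      refine Finset.mem_image.mpr ⟨v0, Finset.mem_insert_self v0 Z, ?_⟩
      rw [hfeq]
      exact Finset.pair_comm d v0
    · have hx1f : x1 ∈ f := by tauto
      obtain ⟨z, hzx1, hfeq⟩ := pair_of_mem hfc hx1f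
      have hzf : z ∈ f := by rw [hfeq]; simp
      have hzv0 : z ≠ v0 := fun h => hv0f (by rw [← h]; exact hzf)
      have hzv1 : z ≠ v1 := fun h => hv1f (by rw [← h]; exact hzf)
      have hzE : ({v1,x1,z} : Finset (Fin n)) ∈ E := by
        have : (insert v1 f : Finset (Fin n)) = {v1,x1,z} := by rw [hfeq]
        rwa [this] at hfE
      refine Finset.mem_image.mpr ⟨z, ?_, hfeq.symm⟩
      refine Finset.mem_insert_of_mem ?_
      rw [hZdef]
      simp only [mem_filter, Finset.mem_univ, true_and]
      exact ⟨hzv0, hzv1, hzx1, hzE⟩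
  have hk1 : L1a.card ≤ Z.card + 1 := by
    calc L1a.card ≤ ((insert v0 Z).image (fun z => ({x1,z} : Finset (Fin n)))).card :=
          Finset.card_le_card hL1a
    _ ≤ (insert v0 Z).card := Finset.card_image_le
    _ ≤ Z.card + 1 := Finset.card_insert_le v0 Z
  have hL1bsub : L1b ⊆ Lk E v1 := Finset.filter_subset _ _
  have hL1bS : L1b.biUnion id ⊆ Sset := by
    intro c hc
    simp only [Finset.mem_biUnion, id_eq] at hc
    obtain ⟨f, hf, hcf⟩ := hc
    rw [hL1bdef] at hf
    obtain ⟨hfL1, hcase⟩ := Finset.mem_filter.mp hf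
    push_neg at hcase
    obtain ⟨hv0f, hx1f⟩ := hcase
    obtain ⟨hfc, hv1f, hfE⟩ := Lk_spec hfL1
    obtain ⟨d, hdc, hfeq⟩ := pair_of_mem hfc hcf
    have hdf : d ∈ f := by rw [hfeq]; simp
    have hcv0 : c ≠ v0 := fun h => hv0f (by rw [← h]; exact hcf)
    have h1 : ({v1,c,d} : Finset (Fin n)) ∈ E := by
      have : (insert v1 f : Finset (Fin n)) = {v1,c,d} := by rw [hfeq]
      rwa [this] at hfE
    have hnE := cross_not hC hB (u := v1) (a := c) (b := d) (c := v0) (d := x1)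
      hdc.symm h0x1 (fun h => hv1f (by rw [h]; exact hcf)) (fun h => hv1f (by rw [h]; exact hdf))
      hv1v0 hv1x1 hcv0 (fun h => hx1f (by rw [← h]; exact hcf))
      (fun h => hv0f (by rw [← h]; exact hdf)) (fun h => hx1f (by rw [← h]; exact hdf))
      h1 T1mem''
    rw [hSdef]
    refine Finset.mem_sdiff.mpr ⟨Finset.mem_erase.mpr ⟨hcv0, Finset.mem_univ c⟩, ?_⟩
    rw [hNv0def]
    simp only [mem_filter, Finset.mem_univ, true_and]
    push_neg
    intro _
    rwa [Finset.pair_comm]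
  have hL1bcard : L1b.card ≤ Sset.card := by
    calc L1b.card ≤ (L1b.biUnion id).card := Lk_sub_crossfree hC hB hL1bsub
    _ ≤ Sset.card := Finset.card_le_card hL1bS

  -- helper: extract second element from pair equality with {v1,x1}
  have hextract : ∀ a b : Fin n, ({a,b} : Finset (Fin n)) = {v1,x1} → a = v1 → b = x1 := by
    intro a b heq ha
    have hx1m : x1 ∈ ({a,b} : Finset (Fin n)) := by rw [heq]; simp
    simp only [mem_insert, mem_singleton] at hx1m
    rcases hx1m with h | h
    · rw [ha] at h
      exact absurd h.symm hv1x1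
    · exact h.symm
  -- case analysis on position of v2, x2
  by_cases hcv2v0 : v2 = v0
  · -- case v2 = v0
    have hPmem0 : ({v0,v1,x2} : Finset (Fin n)) ∈ E := by
      have : ({v2,v1,x2} : Finset (Fin n)) = {v0,v1,x2} := by rw [hcv2v0]
      rwa [this] at Pmem
    have hx2v0 : x2 ≠ v0 := fun h => hv2x2 (hcv2v0.trans h.symm)
    have hmemP : ({v1,x2} : Finset (Fin n)) ∈ Lk E v0 := by
      apply Lk_of
      · exact hPmem0
      · exact Finset.card_pair h1x2
      · simp only [mem_insert, mem_singleton]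
        push_neg
        exact ⟨hv1v0.symm, fun h => hx2v0 h.symm⟩
    have heq1 := huniq _ hmemP (by simp)
    have hx2x1 : x2 = x1 := hextract v1 x2 heq1 rfl
    have hQmem0 : ({v0,x1,y2} : Finset (Fin n)) ∈ E := by
      have : ({v2,x2,y2} : Finset (Fin n)) = {v0,x1,y2} := by rw [hcv2v0, hx2x1]
      rwa [this] at Qmem
    have hy2v0 : y2 ≠ v0 := fun h => hv2y2 (hcv2v0.trans h.symm)
    have hx1y2' : x1 ≠ y2 := by rw [← hx2x1]; exact hx2y2
    have hmemQ : ({x1,y2} : Finset (Fin n)) ∈ Lk E v0 := by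
      apply Lk_of
      · exact hQmem0
      · exact Finset.card_pair hx1y2'
      · simp only [mem_insert, mem_singleton]
        push_neg
        exact ⟨h0x1, fun h => hy2v0 h.symm⟩
    have heq2 := huniqx1 _ hmemQ (by simp)
    have hv1m : v1 ∈ ({x1,y2} : Finset (Fin n)) := by rw [heq2]; simp
    simp only [mem_insert, mem_singleton] at hv1m
    rcases hv1m with h | h
    · exact hv1x1 h
    · exact hy2v1 h.symm
  by_cases hcx2v0 : x2 = v0
  · -- case x2 = v0
    have hPmem0 : ({v0,v2,v1} : Finset (Fin n)) ∈ E := by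
      have : ({v2,v1,x2} : Finset (Fin n)) = {v0,v2,v1} := by
        rw [hcx2v0]; exact tri_perm (fun x => by tauto)
      rwa [this] at Pmem
    have hmemP : ({v2,v1} : Finset (Fin n)) ∈ Lk E v0 := by
      apply Lk_of
      · exact hPmem0
      · exact Finset.card_pair hv2v1
      · simp only [mem_insert, mem_singleton]
        push_neg
        exact ⟨fun h => hcv2v0 h.symm, hv1v0.symm⟩
    have heq1 := huniq _ hmemP (by simp)
    have hv2x1 : v2 = x1 := by
      have : v2 ∈ ({v1,x1} : Finset (Fin n)) := by rw [← heq1]; simp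
      simp only [mem_insert, mem_singleton] at this
      rcases this with h | h
      · exact absurd h hv2v1
      · exact h
    have hQmem0 : ({v0,x1,y2} : Finset (Fin n)) ∈ E := by
      have : ({v2,x2,y2} : Finset (Fin n)) = {v0,x1,y2} := by
        rw [hcx2v0, hv2x1]; exact tri_perm (fun x => by tauto)
      rwa [this] at Qmem
    have hy2v0 : y2 ≠ v0 := fun h => hx2y2 (hcx2v0.trans h.symm)
    have hx1y2' : x1 ≠ y2 := by rw [← hv2x1]; exact hv2y2
    have hmemQ : ({x1,y2} : Finset (Fin n)) ∈ Lk E v0 := by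
      apply Lk_of
      · exact hQmem0
      · exact Finset.card_pair hx1y2'
      · simp only [mem_insert, mem_singleton]
        push_neg
        exact ⟨h0x1, fun h => hy2v0 h.symm⟩
    have heq2 := huniqx1 _ hmemQ (by simp)
    have hv1m : v1 ∈ ({x1,y2} : Finset (Fin n)) := by rw [heq2]; simp
    simp only [mem_insert, mem_singleton] at hv1m
    rcases hv1m with h | h
    · exact hv1x1 h
    · exact hy2v1 h.symm
  by_cases hcx1 : v2 = x1 ∨ x2 = x1
  · -- case (ii)
    obtain ⟨w, hw1, hw2, hwx1, hwv0, hwv1, hy2x1, hy2w⟩ :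
        ∃ w : Fin n, ({v1,x1,w} : Finset (Fin n)) ∈ E ∧ ({x1,w,y2} : Finset (Fin n)) ∈ E ∧
          w ≠ x1 ∧ w ≠ v0 ∧ w ≠ v1 ∧ y2 ≠ x1 ∧ y2 ≠ w := by
      rcases hcx1 with hv2x1 | hx2x1
      · refine ⟨x2, ?_, ?_, fun h => hv2x2 (hv2x1.trans h.symm), hcx2v0, h1x2.symm, ?_, hx2y2.symm⟩
        · have ha : ({x1,v1,x2} : Finset (Fin n)) ∈ E := by rw [← hv2x1]; exact Pmem
          have hb : ({x1,v1,x2} : Finset (Fin n)) = {v1,x1,x2} := tri_perm (fun x => by tauto)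
          rwa [hb] at ha
        · rw [← hv2x1]; exact Qmem
        · rw [← hv2x1]; exact hv2y2.symm
      · refine ⟨v2, ?_, ?_, fun h => hv2x2 (h.trans hx2x1.symm), hcv2v0, hv2v1, ?_, hv2y2.symm⟩
        · have ha : ({v2,v1,x1} : Finset (Fin n)) ∈ E := by rw [← hx2x1]; exact Pmem
          have hb : ({v2,v1,x1} : Finset (Fin n)) = {v1,x1,v2} := tri_perm (fun x => by tauto)
          rwa [hb] at ha
        · have ha : ({v2,x1,y2} : Finset (Fin n)) ∈ E := by rw [← hx2x1]; exact Qmem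
          have hb : ({v2,x1,y2} : Finset (Fin n)) = {x1,v2,y2} := tri_perm (fun x => by tauto)
          rwa [hb] at ha
        · rw [← hx2x1]; exact hx2y2.symm
    have hy2v0 : y2 ≠ v0 := by
      intro h
      have hQ0 : ({v0,x1,w} : Finset (Fin n)) ∈ E := by
        have ha : ({x1,w,v0} : Finset (Fin n)) ∈ E := by rw [← h]; exact hw2
        have hb : ({x1,w,v0} : Finset (Fin n)) = {v0,x1,w} := tri_perm (fun x => by tauto)
        rwa [hb] at ha
      have hmem0 : ({x1,w} : Finset (Fin n)) ∈ Lk E v0 := by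
        apply Lk_of
        · exact hQ0
        · exact Finset.card_pair (fun hh => hwx1 hh.symm)
        · simp only [mem_insert, mem_singleton]
          push_neg
          exact ⟨h0x1, fun hh => hwv0 hh.symm⟩
      have heq := huniqx1 _ hmem0 (by simp)
      have hv1m : v1 ∈ ({x1,w} : Finset (Fin n)) := by rw [heq]; simp
      simp only [mem_insert, mem_singleton] at hv1m
      rcases hv1m with hh | hh
      · exact hv1x1 hh
      · exact hwv1 hh.symm
    apply hB
    refine bcopy hC x1 v0 v1 w y2 h0x1.symm hv1x1.symm hwx1.symm hy2x1.symm
      hv1v0.symm (fun h => hwv0 h.symm) (fun h => hy2v0 h.symm) (fun h => hwv1 h.symm)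
      hy2v1.symm (fun h => hy2w h.symm) ?_ hw2 ?_
    · have : ({v1,v0,x1} : Finset (Fin n)) = {x1,v0,v1} := tri_perm (fun x => by tauto)
      rwa [this] at T1mem''
    · exact hC _ hw1 _ (pair_subset (by simp) (by simp))
  -- case (iii)
  push_neg at hcx1
  obtain ⟨hv2x1, hx2x1⟩ := hcx1
  have Pmem' : ({v1,v2,x2} : Finset (Fin n)) ∈ E := by
    have : ({v2,v1,x2} : Finset (Fin n)) = {v1,v2,x2} := tri_perm (fun x => by tauto)
    rwa [this] at Pmem
  have hn_v2v0 : ({v2,v0} : Finset (Fin n)) ∉ E :=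
    cross_not hC hB (u := v1) (a := v2) (b := x2) (c := v0) (d := x1)
      hv2x2 h0x1 hv2v1.symm h1x2 hv1v0 hv1x1 hcv2v0 hv2x1 hcx2v0 hx2x1 Pmem' T1mem''
  have hn_x2v0 : ({x2,v0} : Finset (Fin n)) ∉ E := by
    have Pmem'' : ({v1,x2,v2} : Finset (Fin n)) ∈ E := by
      have : ({v1,v2,x2} : Finset (Fin n)) = {v1,x2,v2} := tri_perm (fun x => by tauto)
      rwa [this] at Pmem'
    exact cross_not hC hB (u := v1) (a := x2) (b := v2) (c := v0) (d := x1)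
      (fun h => hv2x2 h.symm) h0x1 h1x2 hv2v1.symm hv1v0 hv1x1 hcx2v0 hx2x1 hcv2v0 hv2x1
      Pmem'' T1mem''
  have hn_v2x1 : ({v2,x1} : Finset (Fin n)) ∉ E := by
    have T1m3 : ({v1,x1,v0} : Finset (Fin n)) ∈ E := by
      have : ({v1,v0,x1} : Finset (Fin n)) = {v1,x1,v0} := tri_perm (fun x => by tauto)
      rwa [this] at T1mem''
    exact cross_not hC hB (u := v1) (a := v2) (b := x2) (c := x1) (d := v0)
      hv2x2 h0x1.symm hv2v1.symm h1x2 hv1x1 hv1v0 hv2x1 hcv2v0 hx2x1 hcx2v0 Pmem' T1m3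
  have hn_x2x1 : ({x2,x1} : Finset (Fin n)) ∉ E := by
    have Pmem'' : ({v1,x2,v2} : Finset (Fin n)) ∈ E := by
      have : ({v1,v2,x2} : Finset (Fin n)) = {v1,x2,v2} := tri_perm (fun x => by tauto)
      rwa [this] at Pmem'
    have T1m3 : ({v1,x1,v0} : Finset (Fin n)) ∈ E := by
      have : ({v1,v0,x1} : Finset (Fin n)) = {v1,x1,v0} := tri_perm (fun x => by tauto)
      rwa [this] at T1mem''
    exact cross_not hC hB (u := v1) (a := x2) (b := v2) (c := x1) (d := v0)
      (fun h => hv2x2 h.symm) h0x1.symm h1x2 hv2v1.symm hv1x1 hv1v0 hx2x1 hcx2v0 hv2x1 hcv2v0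
      Pmem'' T1m3
  -- Z-vertices are non-neighbors of v2
  have hZne : ∀ z ∈ Z, z ≠ v2 ∧ z ≠ x2 := by
    intro z hz
    obtain ⟨hzv0, hzv1, hzx1, hzE⟩ := hZmem z hz
    have hx1z : ({x1,z} : Finset (Fin n)) ∈ E :=
      hC _ hzE _ (pair_subset (by simp) (by simp))
    constructor
    · rintro rfl
      exact hn_v2x1 (by rwa [Finset.pair_comm] at hx1z)
    · rintro rfl
      exact hn_x2x1 (by rwa [Finset.pair_comm] at hx1z)
  have hZnadj : ∀ z ∈ Z, ({v2,z} : Finset (Fin n)) ∉ E := by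
    intro z hz
    obtain ⟨hzv0, hzv1, hzx1, hzE⟩ := hZmem z hz
    obtain ⟨hzv2, hzx2⟩ := hZne z hz
    have h1 : ({v1,z,x1} : Finset (Fin n)) ∈ E := by
      have : ({v1,x1,z} : Finset (Fin n)) = {v1,z,x1} := tri_perm (fun x => by tauto)
      rwa [this] at hzE
    have hcr := cross_not hC hB (u := v1) (a := z) (b := x1) (c := v2) (d := x2)
      hzx1 hv2x2 hzv1.symm hv1x1 hv2v1.symm h1x2 hzv2 hzx2
      (fun h => hv2x1 h.symm) (fun h => hx2x1 h.symm) h1 Pmem'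
    intro hmem
    exact hcr (by rwa [Finset.pair_comm] at hmem)
  -- d2(v2) bound
  set Exc : Finset (Fin n) := insert v0 (insert x1 Z) with hExcdef
  have hv0notZ : v0 ∉ Z := fun h => (hZmem v0 h).1 rfl
  have hx1notZ : x1 ∉ Z := fun h => (hZmem x1 h).2.2.1 rfl
  have hExccard : Exc.card = Z.card + 2 := by
    rw [hExcdef, Finset.card_insert_of_notMem, Finset.card_insert_of_notMem hx1notZ]
    · simp only [mem_insert]
      push_neg
      exact ⟨h0x1, hv0notZ⟩
  have hExcsub : Exc ⊆ Finset.univ.erase v2 := by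
    intro w hw
    refine Finset.mem_erase.mpr ⟨?_, Finset.mem_univ w⟩
    rw [hExcdef] at hw
    simp only [mem_insert] at hw
    rcases hw with rfl | rfl | hw
    · exact fun h => hcv2v0 h.symm
    · exact fun h => hv2x1 h.symm
    · exact (hZne w hw).1
  set A2 : Finset (Fin n) := (Finset.univ.erase v2) \ Exc with hA2def
  have hA2mem : ∀ w, w ≠ v2 → ({v2,w} : Finset (Fin n)) ∈ E → w ∈ A2 := by
    intro w hw hwE
    rw [hA2def]
    refine Finset.mem_sdiff.mpr ⟨Finset.mem_erase.mpr ⟨hw, Finset.mem_univ w⟩, ?_⟩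
    rw [hExcdef]
    simp only [mem_insert]
    push_neg
    refine ⟨?_, ?_, ?_⟩
    · rintro rfl
      exact hn_v2v0 hwE
    · rintro rfl
      exact hn_v2x1 hwE
    · intro hwZ
      exact hZnadj w hwZ hwE
  have hA2card : A2.card + Exc.card = (Finset.univ.erase v2).card :=
    Finset.card_sdiff_add_card_eq_card hExcsub
  have hA2card2 : (Finset.univ.erase v2).card + 1 = n := by
    rw [Finset.card_erase_of_mem (Finset.mem_univ v2), Finset.card_univ, Fintype.card_fin]
    omega
  have hd2v2 : degI E 2 v2 ≤ A2.card := deg2_le A2 hA2mem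
  -- endgame at v3
  have hv2x3E : ({v2,x3} : Finset (Fin n)) ∈ E :=
    hC _ Rmem _ (pair_subset (by simp) (by simp))
  have hv2v3E : ({v2,v3} : Finset (Fin n)) ∈ E :=
    hC _ Rmem _ (pair_subset (by simp) (by simp))
  set W : Finset (Fin n) := (Lk E v2).biUnion id with hWdef
  have hWge : (Lk E v2).card ≤ W.card := by
    rw [hWdef]
    exact Lk_sub_crossfree hC hB (Finset.Subset.refl (Lk E v2))
  have hWmem : ∀ w ∈ W, w ≠ v3 → ({v3,w} : Finset (Fin n)) ∈ E → w = x3 ∨ w = y3 := by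
    intro w hwW hwne hwE
    rw [hWdef] at hwW
    simp only [Finset.mem_biUnion, id_eq] at hwW
    obtain ⟨f, hf, hwf⟩ := hwW
    obtain ⟨hfc, hv2f, hfE⟩ := Lk_spec hf
    by_cases hv3f : v3 ∈ f
    · obtain ⟨d, hdv3, hfeq⟩ := pair_of_mem hfc hv3f
      have hdf : d ∈ f := by rw [hfeq]; simp
      have hdn : d = x3 ∨ d = y3 := by
        by_contra hdn
        push_neg at hdn
        have h1 : ({v3,v2,d} : Finset (Fin n)) ∈ E := by
          have : (insert v2 f : Finset (Fin n)) = {v3,v2,d} := by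
            rw [hfeq]; exact tri_perm (fun x => by tauto)
          rwa [this] at hfE
        have hcr := cross_not hC hB (u := v3) (a := v2) (b := d) (c := x3) (d := y3)
          (fun h => hv2f (by rw [h]; exact hdf)) hx3y3 hv3v2 hdv3.symm hv3x3 hv3y3
          h2x3 hy3v2.symm hdn.1 hdn.2 h1 Smem
        exact hcr hv2x3E
      rw [hfeq] at hwf
      simp only [mem_insert, mem_singleton] at hwf
      rcases hwf with rfl | rfl
      · exact absurd rfl hwne
      · exact hdn
    by_cases hx3f : x3 ∈ f
    · obtain ⟨d, hdx3, hfeq⟩ := pair_of_mem hfc hx3f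
      have hdf : d ∈ f := by rw [hfeq]; simp
      have hdv3 : d ≠ v3 := fun h => hv3f (by rw [← h]; exact hdf)
      have hdn : d = y3 := by
        by_contra hdn
        apply hB
        refine bcopy hC x3 d v2 v3 y3 (fun h => hdx3 h.symm) h2x3.symm hv3x3.symm hx3y3
          (fun h => hv2f (by rw [← h]; exact hdf)) hdv3 hdn hv3v2.symm hy3v2.symm hv3y3
          ?_ ?_ hv2v3E
        · have : (insert v2 f : Finset (Fin n)) = {x3,d,v2} := by
            rw [hfeq]; exact tri_perm (fun x => by tauto)
          rwa [this] at hfE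
        · have : ({v3,x3,y3} : Finset (Fin n)) = {x3,v3,y3} := tri_perm (fun x => by tauto)
          rwa [this] at Smem
      rw [hfeq] at hwf
      simp only [mem_insert, mem_singleton] at hwf
      rcases hwf with rfl | rfl
      · exact Or.inl rfl
      · exact Or.inr hdn
    · obtain ⟨d, hdw, hfeq⟩ := pair_of_mem hfc hwf
      have hdf : d ∈ f := by rw [hfeq]; simp
      have h1 : ({v2,w,d} : Finset (Fin n)) ∈ E := by
        have : (insert v2 f : Finset (Fin n)) = {v2,w,d} := by rw [hfeq]
        rwa [this] at hfE
      have h2 : ({v2,v3,x3} : Finset (Fin n)) ∈ E := by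
        have : ({v3,v2,x3} : Finset (Fin n)) = {v2,v3,x3} := tri_perm (fun x => by tauto)
        rwa [this] at Rmem
      have hcr := cross_not hC hB (u := v2) (a := w) (b := d) (c := v3) (d := x3)
        hdw.symm hv3x3 (fun h => hv2f (by rw [h]; exact hwf))
        (fun h => hv2f (by rw [h]; exact hdf)) hv3v2.symm h2x3 hwne
        (fun h => hx3f (by rw [← h]; exact hwf)) (fun h => hv3f (by rw [← h]; exact hdf))
        (fun h => hx3f (by rw [← h]; exact hdf)) h1 h2
      exact absurd (by rwa [Finset.pair_comm] at hwE) hcr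
  set A3 : Finset (Fin n) := ((Finset.univ.erase v3) \ W) ∪ ({x3,y3} : Finset (Fin n)) with hA3def
  have hA3mem : ∀ w, w ≠ v3 → ({v3,w} : Finset (Fin n)) ∈ E → w ∈ A3 := by
    intro w hw hwE
    rw [hA3def]
    by_cases hwW : w ∈ W
    · refine Finset.mem_union_right _ ?_
      rcases hWmem w hwW hw hwE with rfl | rfl <;> simp
    · exact Finset.mem_union_left _
        (Finset.mem_sdiff.mpr ⟨Finset.mem_erase.mpr ⟨hw, Finset.mem_univ w⟩, hwW⟩)
  have hd2v3 : degI E 2 v3 ≤ A3.card := deg2_le A3 hA3mem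
  have hA3card : A3.card ≤ ((Finset.univ.erase v3) \ W).card + 2 := by
    calc A3.card ≤ ((Finset.univ.erase v3) \ W).card + ({x3,y3} : Finset (Fin n)).card := by
          rw [hA3def]; exact Finset.card_union_le _ _
    _ ≤ ((Finset.univ.erase v3) \ W).card + 2 := by
          have : ({x3,y3} : Finset (Fin n)).card ≤ 2 := by
            have := Finset.card_insert_le x3 ({y3} : Finset (Fin n))
            simpa using this
          omega
  have hWer : ((Finset.univ.erase v3) \ W) = ((Finset.univ.erase v3) \ (W.erase v3)) := by
    ext w
    simp only [Finset.mem_sdiff]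
    constructor
    · rintro ⟨hw1, hw2⟩
      exact ⟨hw1, fun hc => hw2 (Finset.mem_of_mem_erase hc)⟩
    · rintro ⟨hw1, hw2⟩
      exact ⟨hw1, fun hc => hw2 (Finset.mem_erase.mpr ⟨(Finset.mem_erase.mp hw1).1, hc⟩)⟩
  have hWersub : W.erase v3 ⊆ Finset.univ.erase v3 := by
    intro w hw
    exact Finset.mem_erase.mpr ⟨(Finset.mem_erase.mp hw).1, Finset.mem_univ w⟩
  have hXcard : ((Finset.univ.erase v3) \ (W.erase v3)).card + (W.erase v3).card
      = (Finset.univ.erase v3).card := Finset.card_sdiff_add_card_eq_card hWersub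
  have hv3erase : (Finset.univ.erase v3).card + 1 = n := by
    rw [Finset.card_erase_of_mem (Finset.mem_univ v3), Finset.card_univ, Fintype.card_fin]
    omega
  have hWcard : W.card ≤ (W.erase v3).card + 1 := by
    by_cases h : v3 ∈ W
    · exact le_of_eq (Finset.card_erase_add_one h).symm
    · rw [Finset.erase_eq_of_notMem h]
      omega
  -- d3(v3) ≤ d2(v3)
  set Nv3 : Finset (Fin n) := Finset.univ.filter
    (fun w => w ≠ v3 ∧ ({v3,w} : Finset (Fin n)) ∈ E) with hNv3def
  have hNv3card : degI E 2 v3 = Nv3.card := deg2_eq E v3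
  have hL3sub : (Lk E v3).biUnion id ⊆ Nv3 := by
    intro c hc
    simp only [Finset.mem_biUnion, id_eq] at hc
    obtain ⟨f, hf, hcf⟩ := hc
    obtain ⟨hfc, hv3f, hfE⟩ := Lk_spec hf
    rw [hNv3def]
    simp only [mem_filter, Finset.mem_univ, true_and]
    refine ⟨fun h => hv3f (by rw [← h]; exact hcf), ?_⟩
    exact hC _ hfE _ (pair_subset (Finset.mem_insert_self _ _) (Finset.mem_insert_of_mem hcf))
  have hd3v3le : (Lk E v3).card ≤ Nv3.card :=
    le_trans (Lk_sub_crossfree hC hB (Finset.Subset.refl (Lk E v3))) (Finset.card_le_card hL3sub)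
  
  -- final numeric contradiction
  have hs0 := dDeg_split hE3 v0
  have hs1 := dDeg_split hE3 v1
  have hs2 := dDeg_split hE3 v2
  have hs3 := dDeg_split hE3 v3
  have hm0 : degI E 3 v0 = (Lk E v0).card := (card_Lk E v0).symm
  have hm1 : degI E 3 v1 = (Lk E v1).card := (card_Lk E v1).symm
  have hm2 : degI E 3 v2 = (Lk E v2).card := (card_Lk E v2).symm
  have hm3 : degI E 3 v3 = (Lk E v3).card := (card_Lk E v3).symm
  have hd3v3 : degI E 3 v3 ≤ degI E 2 v3 := by
    rw [hm3, hNv3card]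
    exact hd3v3le
  -- cast to ℝ
  have r0 : ((dDeg E v0 : ℕ) : ℝ) = (degI E 2 v0 : ℝ) + ((Lk E v0).card : ℝ) := by
    rw [hs0, hm0]; push_cast; ring
  have r1 : ((dDeg E v1 : ℕ) : ℝ) = (degI E 2 v1 : ℝ) + ((Lk E v1).card : ℝ) := by
    rw [hs1, hm1]; push_cast; ring
  have r2 : ((dDeg E v2 : ℕ) : ℝ) = (degI E 2 v2 : ℝ) + ((Lk E v2).card : ℝ) := by
    rw [hs2, hm2]; push_cast; ring
  have r3 : ((dDeg E v3 : ℕ) : ℝ) = (degI E 2 v3 : ℝ) + (degI E 3 v3 : ℝ) := by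
    rw [hs3]; push_cast; ring
  have rN3 : (degI E 2 v0 : ℝ) = (Nv0.card : ℝ) := by exact_mod_cast hNv0card
  have rS : (Sset.card : ℝ) + (Nv0.card : ℝ) + 1 = (n : ℝ) := by
    have : Sset.card + Nv0.card + 1 = n := by omega
    exact_mod_cast this
  have rA1 : (degI E 2 v1 : ℝ) ≤ (A1.card : ℝ) := by exact_mod_cast hd2v1
  have rA1b : (A1.card : ℝ) + (U'.card : ℝ) + 1 = (n : ℝ) := by
    have : A1.card + U'.card + 1 = n := by omega
    exact_mod_cast this
  have rU : (U'.card : ℝ) + 2 = 2 * ((Lk E v0).card : ℝ) := by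
    have : U'.card + 2 = 2 * (Lk E v0).card := by omega
    exact_mod_cast this
  have rL1 : ((Lk E v1).card : ℝ) = (L1a.card : ℝ) + (L1b.card : ℝ) := by
    exact_mod_cast hsplitL1.symm
  have rL1a : (L1a.card : ℝ) ≤ (Z.card : ℝ) + 1 := by exact_mod_cast hk1
  have rL1b : (L1b.card : ℝ) ≤ (Sset.card : ℝ) := by exact_mod_cast hL1bcard
  have rA2 : (degI E 2 v2 : ℝ) ≤ (A2.card : ℝ) := by exact_mod_cast hd2v2
  have rA2b : (A2.card : ℝ) + (Z.card : ℝ) + 3 = (n : ℝ) := by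
    have : A2.card + (Z.card + 2) + 1 = n := by omega
    exact_mod_cast (by omega : A2.card + Z.card + 3 = n)
  have rW : ((Lk E v2).card : ℝ) ≤ (W.card : ℝ) := by exact_mod_cast hWge
  have rA3 : (degI E 2 v3 : ℝ) ≤ (A3.card : ℝ) := by exact_mod_cast hd2v3
  have rA3b : (A3.card : ℝ) ≤ (((Finset.univ.erase v3) \ (W.erase v3)).card : ℝ) + 2 := by
    rw [← hWer]
    exact_mod_cast hA3card
  have rX : (((Finset.univ.erase v3) \ (W.erase v3)).card : ℝ) + ((W.erase v3).card : ℝ) + 1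
      = (n : ℝ) := by
    have : ((Finset.univ.erase v3) \ (W.erase v3)).card + (W.erase v3).card + 1 = n := by omega
    exact_mod_cast this
  have rWc : (W.card : ℝ) ≤ ((W.erase v3).card : ℝ) + 1 := by exact_mod_cast hWcard
  have rd33 : (degI E 3 v3 : ℝ) ≤ (degI E 2 v3 : ℝ) := by exact_mod_cast hd3v3
  have rn : (100 : ℝ) ≤ (n : ℝ) := by exact_mod_cast hn
  have rSpos : (0 : ℝ) ≤ (Sset.card : ℝ) := Nat.cast_nonneg _
  have rL1bpos : (0 : ℝ) ≤ (L1b.card : ℝ) := Nat.cast_nonneg _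
  have hdd0 := hdeg v0
  have hdd1 := hdeg v1
  have hdd2 := hdeg v2
  have hdd3 := hdeg v3
  linarith
end
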